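/- arXiv:1512.02473 — 7 statements merged into one kernel-verified Lean document; each statement's English description precedes it below -/
import Mathlib

section
/- Let X and X₁ be separable real Hilbert spaces and let ι : X₁ → X be an injective continuous linear map with dense range. Let (Ω, F, P) be a probability space and η : Ω → X₁ a strongly measurable random variable such that ι ∘ η is an X-valued Gaussian random variable. Then η is an X₁-valued Gaussian random variable. -/
open MeasureTheory ProbabilityTheory

/-- A random variable with values in a normed space is Gaussian if the image of its law
under every continuous linear functional is a (possibly degenerate) Gaussian law on `ℝ`. -/
def IsGaussianRV {Ω : Type*} [MeasurableSpace Ω] (P : Measure Ω)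
    {E : Type*} [NormedAddCommGroup E] [NormedSpace ℝ E]
    (ξ : Ω → E) : Prop :=
  ∀ ℓ : E →L[ℝ] ℝ, ∃ (m : ℝ) (v : NNReal),
    Measure.map (fun ω => ℓ (ξ ω)) P = gaussianReal m v

section Aux

open Filter Topology Real NNReal ENNReal


lemma myGauss_map_neg (m : ℝ) (v : ℝ≥0) :
    Measure.map (fun x => -x) (gaussianReal m v) = gaussianReal (-m) v := by
  have h := gaussianReal_map_const_mul (μ := m) (v := v) (-1)
  simp only [neg_one_mul] at h
  rw [h]
  congr 1
  ext
  simp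

lemma myGauss_symm (m : ℝ) (v : ℝ≥0) :
    Measure.map (fun x => 2 * m - x) (gaussianReal m v) = gaussianReal m v := by
  have : (fun x : ℝ => 2 * m - x) = (fun x => x + 2 * m) ∘ (fun x => -x) := by
    ext x; simp [sub_eq_neg_add, add_comm]
  rw [this, ← Measure.map_map (by fun_prop) (by fun_prop), myGauss_map_neg,
    gaussianReal_map_add_const]
  congr 1
  ring

lemma myGauss_Iic (m : ℝ) {v : ℝ≥0} (hv : v ≠ 0) :
    gaussianReal m v (Set.Iic m) ≤ 1/2 := by
  have hsingleton : gaussianReal m v {m} = 0 := by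
    refine (gaussianReal_absolutelyContinuous m hv) ?_
    simp
  have hIci : gaussianReal m v (Set.Ici m) = gaussianReal m v (Set.Iic m) := by
    conv_lhs => rw [← myGauss_symm m v]
    rw [Measure.map_apply (by fun_prop) measurableSet_Ici]
    congr 1
    ext x
    simp only [Set.mem_preimage, Set.mem_Ici, Set.mem_Iic]
    constructor <;> intro h <;> linarith
  have hunion : gaussianReal m v (Set.Iic m) + gaussianReal m v (Set.Ici m)
      = 1 + gaussianReal m v {m} := by
    rw [← measure_union_add_inter (Set.Iic m) measurableSet_Ici, Set.Iic_union_Ici,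
      Set.Iic_inter_Ici, Set.Icc_self, measure_univ]
  rw [hIci, hsingleton, add_zero, ← two_mul] at hunion
  have h2 : gaussianReal m v (Set.Iic m) = 1/2 := by
    rw [ENNReal.eq_div_iff (by norm_num) (by norm_num), hunion]
  rw [h2]

lemma myGauss_Ici (m : ℝ) {v : ℝ≥0} (hv : v ≠ 0) :
    gaussianReal m v (Set.Ici m) ≤ 1/2 := by
  have hIci : gaussianReal m v (Set.Ici m) = gaussianReal m v (Set.Iic m) := by
    conv_lhs => rw [← myGauss_symm m v]
    rw [Measure.map_apply (by fun_prop) measurableSet_Ici]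
    congr 1
    ext x
    simp only [Set.mem_preimage, Set.mem_Ici, Set.mem_Iic]
    constructor <;> intro h <;> linarith
  rw [hIci]; exact myGauss_Iic m hv

lemma myGauss_set_le (m : ℝ) {v : ℝ≥0} (hv : v ≠ 0) (s : Set ℝ) :
    gaussianReal m v s ≤ volume s * ENNReal.ofReal (√(2 * π * v))⁻¹ := by
  rw [gaussianReal_apply m hv s]
  calc ∫⁻ x in s, gaussianPDF m v x
      ≤ ∫⁻ _ in s, ENNReal.ofReal (√(2 * π * v))⁻¹ := by
        refine lintegral_mono fun x => ?_
        rw [gaussianPDF_def, gaussianPDFReal_def]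
        refine ENNReal.ofReal_le_ofReal ?_
        have : rexp (-(x - m) ^ 2 / (2 * v)) ≤ 1 := by
          rw [Real.exp_le_one_iff]
          apply div_nonpos_of_nonpos_of_nonneg
          · simp [sq_nonneg]
          · positivity
        nlinarith [inv_nonneg.2 (Real.sqrt_nonneg (2 * π * v))]
    _ = volume s * ENNReal.ofReal (√(2 * π * v))⁻¹ := by
        rw [setLIntegral_const, mul_comm]


noncomputable def myTrunc (K : ℝ) (x : ℝ) : ℝ := max (1 - |x|/K) 0

lemma myTrunc_cont (K : ℝ) : Continuous (myTrunc K) := by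
  unfold myTrunc; fun_prop

lemma myTrunc_nonneg (K x : ℝ) : 0 ≤ myTrunc K x := le_max_right _ _

lemma myTrunc_le_one (K x : ℝ) (hK : 0 < K) : myTrunc K x ≤ 1 := by
  unfold myTrunc
  have : |x| / K ≥ 0 := by positivity
  simp only [max_le_iff]
  constructor <;> linarith

lemma myTrunc_eq_zero (K x : ℝ) (hK : 0 < K) (hx : K < |x|) : myTrunc K x = 0 := by
  unfold myTrunc
  rw [max_eq_right]
  have : 1 < |x| / K := (one_lt_div hK).2 hx
  linarith

lemma myTrunc_tendsto (x : ℝ) :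
    Tendsto (fun K : ℕ => myTrunc K x) atTop (𝓝 1) := by
  have h : Tendsto (fun K : ℕ => 1 - |x| / K) atTop (𝓝 1) := by
    have := tendsto_const_div_atTop_nhds_zero_nat |x|
    have h2 := (tendsto_const_nhds (x := (1:ℝ)) (f := atTop (α := ℕ))).sub this
    simpa using h2
  have := h.max (tendsto_const_nhds (x := (0:ℝ)))
  simpa [myTrunc] using this

lemma myIntegral_trunc_le {μ : Measure ℝ} [IsProbabilityMeasure μ] {K : ℝ} (hK : 0 < K) :
    ∫ x, myTrunc K x ∂μ ≤ (μ (Set.Icc (-K) K)).toReal := by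
  have hint : Integrable (myTrunc K) μ :=
    ⟨(myTrunc_cont K).aestronglyMeasurable,
      HasFiniteIntegral.of_bounded (C := 1) (ae_of_all _ fun x => by
        rw [Real.norm_eq_abs, abs_of_nonneg (myTrunc_nonneg K x)]
        exact myTrunc_le_one K x hK)⟩
  have hind : Integrable ((Set.Icc (-K) K).indicator (1 : ℝ → ℝ)) μ :=
    (integrable_const 1).indicator measurableSet_Icc
  calc ∫ x, myTrunc K x ∂μ ≤ ∫ x, (Set.Icc (-K) K).indicator (1 : ℝ → ℝ) x ∂μ := by
        refine integral_mono hint hind fun x => ?_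
        by_cases hx : x ∈ Set.Icc (-K) K
        · rw [Set.indicator_of_mem hx]
          exact myTrunc_le_one K x hK
        · rw [Set.indicator_of_notMem hx]
          rw [Set.mem_Icc, not_and_or, not_le, not_le] at hx
          refine le_of_eq (myTrunc_eq_zero K x hK ?_)
          rcases hx with h | h
          · rw [abs_of_nonpos (by linarith)]; linarith
          · rw [abs_of_nonneg (by linarith)]; linarith
    _ = (μ (Set.Icc (-K) K)).toReal := by
        rw [integral_indicator_one measurableSet_Icc]; rfl

lemma myGauss_param_bound {m : ℝ} {v : ℝ≥0} {K : ℝ} (hK : 1 ≤ K)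
    (h : 2/3 < ∫ x, myTrunc K x ∂gaussianReal m v) :
    |m| ≤ K ∧ (v : ℝ) ≤ 9 * K^2 := by
  have hK0 : 0 < K := by linarith
  have hIcc : 2/3 < (gaussianReal m v (Set.Icc (-K) K)).toReal :=
    lt_of_lt_of_le h (myIntegral_trunc_le hK0)
  by_cases hv : v = 0
  · subst hv
    simp only [gaussianReal_zero_var] at hIcc
    rw [Measure.dirac_apply' _ measurableSet_Icc] at hIcc
    by_cases hm : m ∈ Set.Icc (-K) K
    · rw [Set.indicator_of_mem hm] at hIcc
      rw [Set.mem_Icc] at hm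
      exact ⟨abs_le.2 hm, by positivity⟩
    · rw [Set.indicator_of_notMem hm] at hIcc
      norm_num at hIcc
  · constructor
    · rw [abs_le]
      constructor
      · by_contra hc
        push_neg at hc
        have hsub : Set.Icc (-K) K ⊆ Set.Ici m := fun x hx => le_trans hc.le hx.1
        have := le_trans (measure_mono hsub) (myGauss_Ici m hv)
        have h2 := ENNReal.toReal_mono (by norm_num) this
        norm_num at h2
        linarith
      · by_contra hc
        push_neg at hc
        have hsub : Set.Icc (-K) K ⊆ Set.Iic m := fun x hx => le_trans hx.2 hc.le
        have := le_trans (measure_mono hsub) (myGauss_Iic m hv)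
        have h2 := ENNReal.toReal_mono (by norm_num) this
        norm_num at h2
        linarith
    · have hb := myGauss_set_le m hv (Set.Icc (-K) K)
      rw [Real.volume_Icc] at hb
      have heq : ENNReal.ofReal (K - -K) * ENNReal.ofReal (√(2 * π * v))⁻¹
          = ENNReal.ofReal ((2*K) * (√(2 * π * v))⁻¹) := by
        rw [← ENNReal.ofReal_mul (by linarith)]
        ring_nf
      rw [heq] at hb
      have h2 := (ENNReal.toReal_mono ENNReal.ofReal_ne_top hb)
      rw [ENNReal.toReal_ofReal (by positivity)] at h2
      have h3 : 2/3 < (2*K) * (√(2 * π * v))⁻¹ := lt_of_lt_of_le hIcc h2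
      have hs0 : (0:ℝ) ≤ 2 * π * v := by positivity
      have hsq : √(2 * π * v) < 3 * K := by
        by_contra hc
        push_neg at hc
        have h5 : (2*K) * (√(2 * π * v))⁻¹ ≤ (2*K) * (3*K)⁻¹ := by
          apply mul_le_mul_of_nonneg_left _ (by linarith)
          exact inv_anti₀ (by positivity) hc
        have h6 : (2*K) * (3*K)⁻¹ = 2/3 := by
          field_simp
        rw [h6] at h5
        linarith
      have h7 : 2 * π * ↑v < (3*K)^2 := by
        have hs := Real.sq_sqrt hs0
        nlinarith [Real.sqrt_nonneg (2*π*(v:ℝ))]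
      nlinarith [Real.pi_gt_three, (v:ℝ), v.coe_nonneg]


lemma myTrunc_le_one' (K : ℕ) (x : ℝ) : myTrunc K x ≤ 1 := by
  rcases Nat.eq_zero_or_pos K with h | h
  · subst h
    simp [myTrunc]
  · exact myTrunc_le_one K x (by exact_mod_cast h)

lemma myTrunc_norm_le (K : ℕ) (x : ℝ) : ‖myTrunc K x‖ ≤ 1 := by
  rw [Real.norm_eq_abs, abs_of_nonneg (myTrunc_nonneg _ _)]
  exact myTrunc_le_one' K x

lemma myGauss_eq_map (m : ℝ) (v : ℝ≥0) :
    gaussianReal m v = Measure.map (fun x => √(v:ℝ) * x + m) (gaussianReal 0 1) := by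
  have h1 : (fun x : ℝ => √(v:ℝ) * x + m) = (· + m) ∘ (fun x : ℝ => √(v:ℝ) * x) := rfl
  rw [h1, ← Measure.map_map (by fun_prop) (by fun_prop)]
  have h2 : Measure.map (fun x : ℝ => √(v:ℝ) * x) (gaussianReal 0 1) = gaussianReal 0 v := by
    rw [gaussianReal_map_const_mul]
    congr 1
    · ring
    · ext
      push_cast
      rw [Real.sq_sqrt v.coe_nonneg, mul_one]
  rw [h2, gaussianReal_map_add_const, zero_add]

lemma myGauss_integral_tendsto {F : ℝ → ℝ} {C : ℝ} (hF : Continuous F) (hFb : ∀ x, ‖F x‖ ≤ C)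
    {ms : ℕ → ℝ} {vs : ℕ → ℝ≥0} {m : ℝ} {v : ℝ≥0}
    (hm : Tendsto ms atTop (𝓝 m)) (hv : Tendsto (fun n => (vs n : ℝ)) atTop (𝓝 (v:ℝ))) :
    Tendsto (fun n => ∫ x, F x ∂gaussianReal (ms n) (vs n)) atTop
      (𝓝 (∫ x, F x ∂gaussianReal m v)) := by
  have key : ∀ (m' : ℝ) (v' : ℝ≥0), ∫ x, F x ∂gaussianReal m' v'
      = ∫ x, F (√(v':ℝ) * x + m') ∂gaussianReal 0 1 := by
    intro m' v'
    rw [myGauss_eq_map m' v', integral_map (by fun_prop) hF.aestronglyMeasurable]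
  simp_rw [key]
  refine tendsto_integral_of_dominated_convergence (fun _ => C)
    (fun n => (hF.comp (by fun_prop)).aestronglyMeasurable)
    (integrable_const C) (fun n => ae_of_all _ fun x => hFb _) (ae_of_all _ fun x => ?_)
  have h1 : Tendsto (fun n => √(vs n : ℝ) * x + ms n) atTop (𝓝 (√(v:ℝ) * x + m)) :=
    ((hv.sqrt).mul_const x).add hm
  exact (hF.tendsto _).comp h1

lemma exists_gaussian_of_tendsto {Ω : Type*} [MeasurableSpace Ω] (P : Measure Ω)
    [IsProbabilityMeasure P] (f : ℕ → Ω → ℝ) (g : Ω → ℝ)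
    (hfm : ∀ n, AEMeasurable (f n) P) (hgm : AEMeasurable g P)
    (ms : ℕ → ℝ) (vs : ℕ → ℝ≥0)
    (hf : ∀ n, Measure.map (f n) P = gaussianReal (ms n) (vs n))
    (hconv : ∀ ω, Tendsto (fun n => f n ω) atTop (𝓝 (g ω))) :
    ∃ (m : ℝ) (v : ℝ≥0), Measure.map g P = gaussianReal m v := by
  -- weak convergence of the laws
  have hW : ∀ (F : ℝ → ℝ) (C : ℝ), Continuous F → (∀ x, ‖F x‖ ≤ C) →
      Tendsto (fun n => ∫ x, F x ∂gaussianReal (ms n) (vs n)) atTop (𝓝 (∫ ω, F (g ω) ∂P)) := by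
    intro F C hF hFb
    have heq : ∀ n, ∫ x, F x ∂gaussianReal (ms n) (vs n) = ∫ ω, F (f n ω) ∂P := by
      intro n
      rw [← hf n, integral_map (hfm n) hF.aestronglyMeasurable]
    simp_rw [heq]
    refine tendsto_integral_of_dominated_convergence (fun _ => C)
      (fun n => hF.comp_aestronglyMeasurable (hfm n).aestronglyMeasurable)
      (integrable_const C) (fun n => ae_of_all _ fun ω => hFb _)
      (ae_of_all _ fun ω => (hF.tendsto _).comp (hconv ω))
  -- pick a truncation level capturing most of the mass of the limit
  have hTend : Tendsto (fun K : ℕ => ∫ ω, myTrunc K (g ω) ∂P) atTop (𝓝 1) := by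
    have h1 : (1:ℝ) = ∫ _ω, (1:ℝ) ∂P := by simp
    rw [h1]
    exact tendsto_integral_of_dominated_convergence (fun _ => 1)
      (fun K => (myTrunc_cont K).comp_aestronglyMeasurable hgm.aestronglyMeasurable)
      (integrable_const 1) (fun K => ae_of_all _ fun ω => myTrunc_norm_le K (g ω))
      (ae_of_all _ fun ω => myTrunc_tendsto (g ω))
  obtain ⟨K, hK1, hKgt⟩ : ∃ K : ℕ, 1 ≤ (K:ℝ) ∧ 2/3 < ∫ ω, myTrunc K (g ω) ∂P := by
    have h2 := hTend.eventually (eventually_gt_nhds (by norm_num : (2/3:ℝ) < 1))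
    obtain ⟨K, hK⟩ := (h2.and (eventually_ge_atTop 1)).exists
    exact ⟨K, by exact_mod_cast hK.2, hK.1⟩
  -- eventual bounds on the parameters
  have hEv : ∀ᶠ n in atTop, |ms n| ≤ (K:ℝ) ∧ (vs n : ℝ) ≤ 9 * (K:ℝ)^2 := by
    have h1 := (hW (myTrunc K) 1 (myTrunc_cont K) (myTrunc_norm_le K)).eventually
      (eventually_gt_nhds hKgt)
    filter_upwards [h1] with n hn
    exact myGauss_param_bound hK1 hn
  obtain ⟨N, hN⟩ := eventually_atTop.1 hEv
  -- extract a convergent subsequence of the parameters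
  have hb1 : ∀ n : ℕ, ms (n + N) ∈ Set.Icc (-(K:ℝ)) (K:ℝ) := fun n => by
    rw [Set.mem_Icc]
    exact abs_le.1 (hN (n + N) (by omega)).1
  obtain ⟨m₀, -, φ₁, hφ₁, hmlim⟩ := tendsto_subseq_of_bounded (Metric.isBounded_Icc _ _) hb1
  have hb2 : ∀ n : ℕ, (vs (φ₁ n + N) : ℝ) ∈ Set.Icc (0:ℝ) (9*(K:ℝ)^2) := fun n =>
    ⟨(vs _).coe_nonneg, (hN (φ₁ n + N) (by omega)).2⟩
  obtain ⟨v₀, hv₀mem, φ₂, hφ₂, hvlim⟩ := tendsto_subseq_of_bounded (Metric.isBounded_Icc _ _) hb2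
  rw [isClosed_Icc.closure_eq, Set.mem_Icc] at hv₀mem
  set φ : ℕ → ℕ := fun k => φ₁ (φ₂ k) + N with hφdef
  have hφmono : StrictMono φ := (hφ₁.comp hφ₂).add_const N
  have hmφ : Tendsto (fun k => ms (φ k)) atTop (𝓝 m₀) := hmlim.comp hφ₂.tendsto_atTop
  have hv₀ : ((v₀.toNNReal : ℝ)) = v₀ := Real.coe_toNNReal v₀ hv₀mem.1
  have hvφ : Tendsto (fun k => (vs (φ k) : ℝ)) atTop (𝓝 ((v₀.toNNReal : ℝ))) := by
    rw [hv₀]; exact hvlim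
  refine ⟨m₀, v₀.toNNReal, ?_⟩
  haveI : IsProbabilityMeasure (Measure.map g P) := Measure.isProbabilityMeasure_map hgm
  refine ext_of_forall_lintegral_eq_of_IsFiniteMeasure fun F => ?_
  set Fr : ℝ → ℝ := fun x => (F x : ℝ) with hFrdef
  have hFrc : Continuous Fr := NNReal.continuous_coe.comp F.continuous
  obtain ⟨C, hC⟩ := F.bounded
  set C' : ℝ := C + Fr 0 with hC'def
  have hFrb : ∀ x, ‖Fr x‖ ≤ C' := fun x => by
    have h1 : dist (F x) (F 0) ≤ C := hC x 0
    rw [NNReal.dist_eq] at h1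
    have h2 : Fr x - Fr 0 ≤ C := le_trans (le_abs_self _) h1
    rw [Real.norm_eq_abs, abs_of_nonneg ((F x).coe_nonneg)]
    have : (0:ℝ) ≤ Fr 0 := (F 0).coe_nonneg
    simp only [hC'def]
    linarith
  have hFrnn : ∀ x, 0 ≤ Fr x := fun x => (F x).coe_nonneg
  have hL : Tendsto (fun k => ∫ x, Fr x ∂gaussianReal (ms (φ k)) (vs (φ k))) atTop
      (𝓝 (∫ ω, Fr (g ω) ∂P)) :=
    (hW Fr C' hFrc hFrb).comp hφmono.tendsto_atTop
  have hR : Tendsto (fun k => ∫ x, Fr x ∂gaussianReal (ms (φ k)) (vs (φ k))) atTop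
      (𝓝 (∫ x, Fr x ∂gaussianReal m₀ v₀.toNNReal)) :=
    myGauss_integral_tendsto hFrc hFrb hmφ hvφ
  have hEqInt : ∫ ω, Fr (g ω) ∂P = ∫ x, Fr x ∂gaussianReal m₀ v₀.toNNReal :=
    tendsto_nhds_unique hL hR
  have hIntble : ∀ (μ : Measure ℝ), IsProbabilityMeasure μ → Integrable Fr μ := fun μ _ =>
    ⟨hFrc.aestronglyMeasurable, HasFiniteIntegral.of_bounded (C := C') (ae_of_all _ hFrb)⟩
  have key : ∀ (μ : Measure ℝ), IsProbabilityMeasure μ →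
      ∫⁻ x, (F x : ℝ≥0∞) ∂μ = ENNReal.ofReal (∫ x, Fr x ∂μ) := by
    intro μ hμ
    rw [ofReal_integral_eq_lintegral_ofReal (hIntble μ hμ) (ae_of_all _ hFrnn)]
    congr 1 with x
    rw [hFrdef]
    exact (ENNReal.ofReal_coe_nnreal).symm
  rw [key _ this, key _ (by infer_instance)]
  congr 1
  rw [integral_map hgm hFrc.aestronglyMeasurable]
  exact hEqInt

end Aux

open Filter Topology Real NNReal ENNReal in
/-- A Gaussian random variable that takes values in a densely and continuously embedded
Hilbert subspace is Gaussian as a random variable in that subspace. -/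
theorem stmt0 {Ω : Type*} [MeasurableSpace Ω] (P : Measure Ω) [IsProbabilityMeasure P]
    {X X₁ : Type*}
    [NormedAddCommGroup X] [InnerProductSpace ℝ X] [CompleteSpace X]
    [TopologicalSpace.SeparableSpace X]
    [NormedAddCommGroup X₁] [InnerProductSpace ℝ X₁] [CompleteSpace X₁]
    [TopologicalSpace.SeparableSpace X₁]
    (ι : X₁ →L[ℝ] X) (hinj : Function.Injective ι) (hdense : DenseRange ι)
    (η : Ω → X₁) (hmeas : StronglyMeasurable η)
    (hG : IsGaussianRV P (fun ω => ι (η ω))) :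
    IsGaussianRV P η := by
  intro ℓ
  classical
  set A : X →L[ℝ] X₁ := ContinuousLinearMap.adjoint ι with hAdef
  -- the adjoint has dense range since ι is injective
  have hAdense : Dense (Set.range A) := by
    have horth : (LinearMap.range (A : X →ₗ[ℝ] X₁))ᗮ = ⊥ := by
      rw [Submodule.eq_bot_iff]
      intro z hz
      have h1 : ∀ y : X, inner (𝕜 := ℝ) (A y) z = (0:ℝ) := fun y =>
        hz (A y) (LinearMap.mem_range_self _ y)
      have h2 : ι z = 0 := by
        have h3 := h1 (ι z)
        rw [hAdef, ContinuousLinearMap.adjoint_inner_left] at h3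
        exact inner_self_eq_zero.1 h3
      exact hinj (by rw [h2, map_zero])
    have htop : (LinearMap.range (A : X →ₗ[ℝ] X₁)).topologicalClosure = ⊤ :=
      Submodule.topologicalClosure_eq_top_iff.2 horth
    have hclosure : closure (Set.range A) = Set.univ := by
      have := congrArg (fun S : Submodule ℝ X₁ => (S : Set X₁)) htop
      simpa [Submodule.topologicalClosure_coe, LinearMap.coe_range] using this
    rw [dense_iff_closure_eq]
    exact hclosure
  set z : X₁ := (InnerProductSpace.toDual ℝ X₁).symm ℓ with hzdef
  have hz : z ∈ closure (Set.range A) := by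
    rw [hAdense.closure_eq]; trivial
  obtain ⟨u, hu_mem, hu_lim⟩ := mem_closure_iff_seq_limit.1 hz
  choose y hy using hu_mem
  -- the approximating real random variables
  set f : ℕ → Ω → ℝ := fun n ω => inner (𝕜 := ℝ) (u n) (η ω) with hfdef
  set g : Ω → ℝ := fun ω => ℓ (η ω) with hgdef
  have hg_eq : ∀ ω, g ω = inner (𝕜 := ℝ) z (η ω) := fun ω =>
    (InnerProductSpace.toDual_symm_apply).symm
  -- each f n is Gaussian
  have hfG : ∀ n, ∃ (m : ℝ) (v : NNReal),
      Measure.map (f n) P = gaussianReal m v := by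
    intro n
    obtain ⟨m, v, hmv⟩ := hG (InnerProductSpace.toDual ℝ X (y n))
    refine ⟨m, v, ?_⟩
    rw [← hmv]
    congr 1
    ext ω
    rw [hfdef]
    simp only
    rw [← hy n, hAdef, ContinuousLinearMap.adjoint_inner_left,
      InnerProductSpace.toDual_apply_apply]
  choose ms vs hmv using hfG
  -- measurability
  have hfm : ∀ n, AEMeasurable (f n) P := fun n =>
    ((continuous_const.inner continuous_id).comp_stronglyMeasurable hmeas).measurable.aemeasurable
  have hgm : AEMeasurable g P :=
    (ℓ.continuous.comp_stronglyMeasurable hmeas).measurable.aemeasurable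
  -- pointwise convergence
  have hconv : ∀ ω, Filter.Tendsto (fun n => f n ω) Filter.atTop (nhds (g ω)) := by
    intro ω
    rw [hg_eq ω]
    exact hu_lim.inner tendsto_const_nhds
  exact exists_gaussian_of_tendsto P f g hfm hgm ms vs hmv hconv
end

section
/- Let (Ω, F, P) be a probability space, and let (X_n)_{n∈ℕ} be real-valued random variables such that each X_n has a (possibly degenerate) Gaussian law, i.e., the law of X_n is gaussianReal m_n v_n for some m_n ∈ ℝ and v_n ≥ 0. If X is a measurable real-valued random variable and X_n → X almost surely, then X has a Gaussian law: there exist m ∈ ℝ and v ≥ 0 such that the law of X is gaussianReal m v. -/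
open MeasureTheory ProbabilityTheory Filter
open scoped ENNReal NNReal Topology

/-- Representation of a (possibly degenerate) Gaussian as an affine image of the
standard Gaussian. -/
lemma gaussianReal_eq_map_affine (m : ℝ) (v : NNReal) :
    Measure.map (fun z => m + Real.sqrt v * z) (gaussianReal 0 1) = gaussianReal m v := by
  have h1 : (fun z : ℝ => m + Real.sqrt v * z)
      = (fun x : ℝ => m + x) ∘ (fun z : ℝ => Real.sqrt v * z) := rfl
  rw [h1, ← Measure.map_map (measurable_const_add m) (measurable_const_mul _)]
  have h2 : Measure.map (fun z : ℝ => Real.sqrt v * z) (gaussianReal 0 1)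
      = gaussianReal 0 v := by
    have h := gaussianReal_map_const_mul (μ := 0) (v := 1) (Real.sqrt v)
    have hv : (⟨Real.sqrt v ^ 2, sq_nonneg _⟩ * 1 : NNReal) = v := by
      exact NNReal.eq (show Real.sqrt v ^ 2 * 1 = v by rw [mul_one, Real.sq_sqrt v.coe_nonneg])
    rw [mul_zero] at h
    convert h using 2
    exact hv.symm
  rw [h2]
  have h3 := gaussianReal_map_const_add (μ := 0) (v := v) m
  rw [zero_add] at h3
  exact h3

lemma gaussianReal_pos_Ici : 0 < gaussianReal 0 1 (Set.Ici (1 : ℝ)) := by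
  rw [pos_iff_ne_zero]
  intro h
  have := gaussianReal_absolutelyContinuous' (0 : ℝ) (v := 1) one_ne_zero h
  rw [Real.volume_Ici] at this
  exact ENNReal.top_ne_zero this

lemma gaussianReal_pos_Iic : 0 < gaussianReal 0 1 (Set.Iic (-1 : ℝ)) := by
  rw [pos_iff_ne_zero]
  intro h
  have := gaussianReal_absolutelyContinuous' (0 : ℝ) (v := 1) one_ne_zero h
  rw [Real.volume_Iic] at this
  exact ENNReal.top_ne_zero this

/-- An almost sure limit of real Gaussian random variables is Gaussian. -/
theorem stmt1 {Ω : Type*} [MeasurableSpace Ω] (P : Measure Ω) [IsProbabilityMeasure P]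
    (X : ℕ → Ω → ℝ) (hXmeas : ∀ n, Measurable (X n))
    (m : ℕ → ℝ) (v : ℕ → NNReal)
    (hlaw : ∀ n, Measure.map (X n) P = gaussianReal (m n) (v n))
    (Xlim : Ω → ℝ) (hXlim : Measurable Xlim)
    (hconv : ∀ᵐ ω ∂P, Tendsto (fun n => X n ω) atTop (nhds (Xlim ω))) :
    ∃ (μ : ℝ) (σ2 : NNReal), Measure.map Xlim P = gaussianReal μ σ2 := by
  classical
  set γ : Measure ℝ := gaussianReal 0 1 with hγdef
  set c : ℝ≥0∞ := min (γ (Set.Ici (1:ℝ))) (γ (Set.Iic (-1:ℝ))) with hcdef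
  have hc0 : 0 < c := lt_min gaussianReal_pos_Ici gaussianReal_pos_Iic
  have hcI : c ≤ γ (Set.Ici (1:ℝ)) := min_le_left _ _
  have hcI' : c ≤ γ (Set.Iic (-1:ℝ)) := min_le_right _ _
  -- the affine maps
  set T : ℕ → ℝ → ℝ := fun n z => m n + Real.sqrt (v n) * z with hTdef
  have hTmeas : ∀ n, Measurable (T n) := fun n =>
    measurable_const.add (measurable_const.mul measurable_id)
  have hmapT : ∀ n, Measure.map (X n) P = Measure.map (T n) γ := fun n => by
    rw [hlaw n, ← gaussianReal_eq_map_affine]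
  -- tightness: find R with uniform small tails
  set A : ℕ → Set Ω := fun M => ⋂ n, {ω | |X n ω| ≤ (M:ℝ)} with hAdef
  have hAmeas : ∀ M, MeasurableSet (A M) := fun M =>
    MeasurableSet.iInter fun n => measurableSet_le (hXmeas n).abs measurable_const
  have hAanti : Antitone (fun M => (A M)ᶜ) := by
    intro M N hMN
    apply Set.compl_subset_compl.mpr
    intro ω hω
    simp only [A, Set.mem_iInter, Set.mem_setOf_eq] at hω ⊢
    intro n
    exact (hω n).trans (by exact_mod_cast hMN)
  have hInter : P (⋂ M, (A M)ᶜ) = 0 := by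
    rw [← Set.compl_iUnion]
    have h1 : ∀ᵐ ω ∂P, ω ∈ ⋃ M, A M := by
      filter_upwards [hconv] with ω hω
      have hb : BddAbove (Set.range fun n => |X n ω|) :=
        Filter.Tendsto.bddAbove_range (u := fun n => |X n ω|)
          ((continuous_abs.tendsto _).comp hω)
      obtain ⟨b, hb⟩ := hb
      refine Set.mem_iUnion.2 ⟨⌈b⌉₊, Set.mem_iInter.2 fun n => ?_⟩
      exact le_trans (hb (Set.mem_range_self n)) (Nat.le_ceil b)
    rw [ae_iff] at h1
    exact h1
  have htend : Tendsto (fun M => P ((A M)ᶜ)) atTop (𝓝 0) := by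
    have := tendsto_measure_iInter_atTop (μ := P)
      (s := fun M => (A M)ᶜ)
      (fun M => (hAmeas M).compl.nullMeasurableSet) hAanti
      ⟨0, measure_ne_top _ _⟩
    rwa [hInter] at this
  obtain ⟨M, hM⟩ : ∃ M : ℕ, P ((A M)ᶜ) < c :=
    (htend.eventually_lt_const hc0).exists
  set R : ℝ := (M : ℝ) + 1 with hRdef
  have hR0 : (0:ℝ) < R := by positivity
  have htail : ∀ n, P {ω | R < |X n ω|} < c := by
    intro n
    refine lt_of_le_of_lt (measure_mono ?_) hM
    intro ω hω
    simp only [Set.mem_compl_iff, A, Set.mem_iInter, Set.mem_setOf_eq] at hω ⊢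
    intro hall
    have := hall n
    have : |X n ω| ≤ R := le_trans this (by simp [hRdef])
    exact absurd hω (not_lt.mpr this)
  -- tail measure rewriting
  have hmap_set : ∀ n (s : Set ℝ), MeasurableSet s →
      P (X n ⁻¹' s) = γ (T n ⁻¹' s) := by
    intro n s hs
    rw [← Measure.map_apply (hXmeas n) hs, hmapT n, Measure.map_apply (hTmeas n) hs]
  -- bound on means
  have habs_meas : MeasurableSet {x : ℝ | R < |x|} :=
    measurableSet_lt measurable_const measurable_abs
  have htail' : ∀ n, γ (T n ⁻¹' {x : ℝ | R < |x|}) < c := by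
    intro n
    rw [← hmap_set n _ habs_meas]
    exact htail n
  -- bound on means
  have hm_bdd : ∀ n, |m n| ≤ R := by
    intro n
    by_contra h
    push_neg at h
    rcases lt_abs.mp h with h' | h'
    · -- m n > R : use right tail
      have hsub : Set.Ici (1:ℝ) ⊆ T n ⁻¹' {x : ℝ | R < |x|} := by
        intro z hz
        have hz0 : (0:ℝ) ≤ z := le_trans zero_le_one hz
        have h1 : R < T n z := by
          have : (0:ℝ) ≤ Real.sqrt (v n) * z :=
            mul_nonneg (Real.sqrt_nonneg _) hz0
          simp only [T]
          linarith
        simp only [Set.mem_preimage, Set.mem_setOf_eq]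
        exact lt_of_lt_of_le h1 (le_abs_self _)
      exact absurd (le_trans hcI (measure_mono hsub)) (not_le.mpr (htail' n))
    · -- m n < -R : use left tail
      have hmn : m n < -R := by linarith
      have hsub : Set.Iic (-1:ℝ) ⊆ T n ⁻¹' {x : ℝ | R < |x|} := by
        intro z hz
        have hz0 : z ≤ 0 := le_trans hz (by norm_num)
        have h1 : T n z < -R := by
          have : Real.sqrt (v n) * z ≤ 0 :=
            mul_nonpos_of_nonneg_of_nonpos (Real.sqrt_nonneg _) hz0
          simp only [T]
          linarith
        simp only [Set.mem_preimage, Set.mem_setOf_eq]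
        calc R < -(T n z) := by linarith
        _ ≤ |T n z| := neg_le_abs _
      exact absurd (le_trans hcI' (measure_mono hsub)) (not_le.mpr (htail' n))
  -- bound on standard deviations
  have hs_bdd : ∀ n, Real.sqrt (v n) ≤ 2 * R := by
    intro n
    by_contra h
    push_neg at h
    have hsub : Set.Ici (1:ℝ) ⊆ T n ⁻¹' {x : ℝ | R < |x|} := by
      intro z hz
      have h1 : Real.sqrt (v n) ≤ Real.sqrt (v n) * z :=
        le_mul_of_one_le_right (Real.sqrt_nonneg _) hz
      have hm := abs_le.mp (hm_bdd n)
      have h2 : R < T n z := by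
        simp only [T]
        linarith
      simp only [Set.mem_preimage, Set.mem_setOf_eq]
      exact lt_of_lt_of_le h2 (le_abs_self _)
    exact absurd (le_trans hcI (measure_mono hsub)) (not_le.mpr (htail' n))
  have hv_bdd : ∀ n, (v n : ℝ) ∈ Set.Icc (0:ℝ) ((2*R)^2) := by
    intro n
    refine ⟨(v n).coe_nonneg, ?_⟩
    have := hs_bdd n
    have h1 : Real.sqrt (v n) ^ 2 ≤ (2*R)^2 :=
      pow_le_pow_left₀ (Real.sqrt_nonneg _) this 2
    rwa [Real.sq_sqrt (v n).coe_nonneg] at h1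
  -- Bolzano–Weierstrass on the pairs (m n, v n)
  have hK : IsCompact (Set.Icc (-R) R ×ˢ Set.Icc (0:ℝ) ((2*R)^2)) :=
    isCompact_Icc.prod isCompact_Icc
  have hmem : ∀ n, ((m n, (v n : ℝ)) : ℝ × ℝ) ∈
      Set.Icc (-R) R ×ˢ Set.Icc (0:ℝ) ((2*R)^2) := by
    intro n
    exact ⟨⟨(abs_le.mp (hm_bdd n)).1, (abs_le.mp (hm_bdd n)).2⟩, hv_bdd n⟩
  obtain ⟨⟨μ₀, v₀⟩, hmemK, φ, hφmono, hφtend⟩ := hK.tendsto_subseq hmem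
  have hv₀ : (0:ℝ) ≤ v₀ := hmemK.2.1
  have hmtend : Tendsto (fun k => m (φ k)) atTop (𝓝 μ₀) :=
    (continuous_fst.tendsto _).comp hφtend
  have hvtend : Tendsto (fun k => ((v (φ k)) : ℝ)) atTop (𝓝 v₀) :=
    (continuous_snd.tendsto _).comp hφtend
  have hstend : Tendsto (fun k => Real.sqrt (v (φ k))) atTop (𝓝 (Real.sqrt v₀)) :=
    (Real.continuous_sqrt.tendsto _).comp hvtend
  refine ⟨μ₀, v₀.toNNReal, ?_⟩
  have hσ : ((v₀.toNNReal : ℝ)) = v₀ := Real.coe_toNNReal _ hv₀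
  haveI : IsProbabilityMeasure (Measure.map Xlim P) :=
    Measure.isProbabilityMeasure_map hXlim.aemeasurable
  haveI : IsProbabilityMeasure γ := by
    rw [hγdef]; infer_instance
  apply ext_of_forall_lintegral_eq_of_IsFiniteMeasure
  intro f
  set g : ℝ → ℝ := fun x => (f x : ℝ) with hgdef
  have hg_cont : Continuous g := NNReal.continuous_coe.comp f.continuous
  obtain ⟨Cd, hCd⟩ := f.bounded
  set Cb : ℝ := Cd + (f 0 : ℝ) with hCb
  have hg_bdd : ∀ x, ‖g x‖ ≤ Cb := by
    intro x
    have h1 : dist (f x) (f 0) ≤ Cd := hCd x 0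
    rw [NNReal.dist_eq] at h1
    have h2 : (f x : ℝ) - (f 0 : ℝ) ≤ Cd := (abs_le.mp h1).2
    have h3 : ‖g x‖ = (f x : ℝ) := by
      simp [g, abs_of_nonneg (f x).coe_nonneg, Real.norm_eq_abs]
    rw [h3]; linarith
  have hInt : ∀ (μ' : Measure ℝ), IsProbabilityMeasure μ' → Integrable g μ' := by
    intro μ' hμ'
    exact ⟨hg_cont.aestronglyMeasurable,
      HasFiniteIntegral.of_bounded (C := Cb) (ae_of_all _ hg_bdd)⟩
  -- the common sequence of integrals
  have hseq : ∀ n, ∫ ω, g (X n ω) ∂P = ∫ z, g (T n z) ∂γ := by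
    intro n
    rw [← integral_map (hXmeas n).aemeasurable hg_cont.aestronglyMeasurable,
      hmapT n, integral_map (hTmeas n).aemeasurable hg_cont.aestronglyMeasurable]
  -- limit 1 : towards the law of Xlim
  have hlim1 : Tendsto (fun k => ∫ ω, g (X (φ k) ω) ∂P) atTop
      (𝓝 (∫ ω, g (Xlim ω) ∂P)) := by
    apply tendsto_integral_of_dominated_convergence (fun _ => Cb)
    · exact fun k => (hg_cont.measurable.comp (hXmeas (φ k))).aestronglyMeasurable
    · exact integrable_const _
    · exact fun k => ae_of_all _ fun ω => hg_bdd _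
    · filter_upwards [hconv] with ω hω
      exact (hg_cont.tendsto _).comp (hω.comp hφmono.tendsto_atTop)
  -- limit 2 : towards the Gaussian with the limit parameters
  have hlim2 : Tendsto (fun k => ∫ z, g (T (φ k) z) ∂γ) atTop
      (𝓝 (∫ z, g (μ₀ + Real.sqrt v₀ * z) ∂γ)) := by
    apply tendsto_integral_of_dominated_convergence (fun _ => Cb)
    · exact fun k => (hg_cont.measurable.comp (hTmeas (φ k))).aestronglyMeasurable
    · exact integrable_const _
    · exact fun k => ae_of_all _ fun z => hg_bdd _
    · refine ae_of_all _ fun z => ?_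
      have : Tendsto (fun k => T (φ k) z) atTop (𝓝 (μ₀ + Real.sqrt v₀ * z)) :=
        hmtend.add (hstend.mul tendsto_const_nhds)
      exact (hg_cont.tendsto _).comp this
  -- identify the two limits
  have hkey : ∫ ω, g (Xlim ω) ∂P = ∫ z, g (μ₀ + Real.sqrt v₀ * z) ∂γ := by
    refine tendsto_nhds_unique ?_ hlim2
    simpa only [hseq] using hlim1
  -- convert to integrals over the two measures
  have hL : ∫ x, g x ∂(Measure.map Xlim P) = ∫ ω, g (Xlim ω) ∂P :=
    integral_map hXlim.aemeasurable hg_cont.aestronglyMeasurable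
  have hRt : ∫ x, g x ∂(gaussianReal μ₀ v₀.toNNReal)
      = ∫ z, g (μ₀ + Real.sqrt v₀ * z) ∂γ := by
    rw [← gaussianReal_eq_map_affine μ₀ v₀.toNNReal,
      integral_map (by fun_prop) hg_cont.aestronglyMeasurable]
    simp_rw [hσ]
    rfl
  have hint_eq : ∫ x, g x ∂(Measure.map Xlim P)
      = ∫ x, g x ∂(gaussianReal μ₀ v₀.toNNReal) := by
    rw [hL, hRt, hkey]
  haveI : IsProbabilityMeasure (gaussianReal μ₀ v₀.toNNReal) := by infer_instance
  rw [lintegral_coe_eq_integral f (hInt _ ‹_›), lintegral_coe_eq_integral f (hInt _ ‹_›)]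
  rw [hint_eq]
end

section
/- Let λ ∈ ℂ and μ ≥ 0 be such that |exp(λ s)| ≤ μ for all s ≥ 0, and let 0 < h ≤ t. Then |∫_{t−h}^t exp(λ s) ds − ∫_t^{t+h} exp(λ s) ds| ≤ μ h² |λ|. -/
/-- Small-eigenvalue bound: if `|e^{λs}| ≤ μ` for all `s ≥ 0` and `0 < h ≤ t`, then
`|∫_{t−h}^t e^{λs} ds − ∫_t^{t+h} e^{λs} ds| ≤ μ h² |λ|`. -/
theorem stmt5 (l : ℂ) (μ : ℝ) (hμ : 0 ≤ μ)
    (hexp : ∀ s : ℝ, 0 ≤ s → ‖Complex.exp (l * s)‖ ≤ μ)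
    (t h : ℝ) (hh : 0 < h) (hht : h ≤ t) :
    ‖(∫ s in (t - h)..t, Complex.exp (l * s)) -
        ∫ s in t..(t + h), Complex.exp (l * s)‖ ≤ μ * h ^ 2 * ‖l‖ := by
  rcases eq_or_ne l 0 with rfl | hl
  · simp [mul_nonneg, hμ, sq_nonneg]
  have hth : (0:ℝ) ≤ t - h := by linarith
  have hcont : ∀ a b : ℝ, IntervalIntegrable (fun s : ℝ => Complex.exp (l * s))
      MeasureTheory.volume a b := by
    intro a b
    apply Continuous.intervalIntegrable
    fun_prop
  have hshift : (∫ s in t..(t + h), Complex.exp (l * s))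
      = ∫ s in (t - h)..t, Complex.exp (l * (s + h : ℝ)) := by
    have := intervalIntegral.integral_comp_add_right (a := t - h) (b := t)
      (f := fun s : ℝ => Complex.exp (l * s)) h
    rw [this]
    congr 1 <;> ring
  rw [hshift, ← intervalIntegral.integral_sub (hcont _ _)]
  · have key : ∀ s ∈ Set.uIcc (t - h) t,
        ‖Complex.exp (l * s) - Complex.exp (l * (s + h : ℝ))‖
          ≤ μ * h * ‖l‖ := by
      intro s hs
      rw [Set.uIcc_of_le (by linarith)] at hs
      have hs0 : (0:ℝ) ≤ s := le_trans hth hs.1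
      have hint := integral_exp_mul_complex (a := s) (b := s + h) hl
      have heq : Complex.exp (l * s) - Complex.exp (l * (s + h : ℝ))
          = -(l * ∫ u in s..(s + h), Complex.exp (l * u)) := by
        rw [hint]
        field_simp
        ring
      rw [heq, norm_neg, norm_mul]
      have hbound : ‖∫ u in s..(s + h), Complex.exp (l * u)‖ ≤ μ * h := by
        have := intervalIntegral.norm_integral_le_of_norm_le_const
          (C := μ) (f := fun u : ℝ => Complex.exp (l * u)) (a := s) (b := s + h) ?_
        · simpa [abs_of_nonneg hh.le] using this
        · intro u hu
          rw [Set.uIoc_of_le (by linarith)] at hu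
          exact hexp u (le_trans hs0 hu.1.le)
      calc ‖l‖ * ‖∫ u in s..(s + h), Complex.exp (l * u)‖
          ≤ ‖l‖ * (μ * h) := by
            exact mul_le_mul_of_nonneg_left hbound (norm_nonneg l)
        _ = μ * h * ‖l‖ := by ring
    have := intervalIntegral.norm_integral_le_of_norm_le_const
      (C := μ * h * ‖l‖)
      (f := fun s : ℝ => Complex.exp (l * s) - Complex.exp (l * (s + h : ℝ)))
      (a := t - h) (b := t) (fun u hu => key u (Set.uIoc_subset_uIcc hu))
    calc ‖∫ s in (t - h)..t,
          (Complex.exp (l * s) - Complex.exp (l * (s + h : ℝ)))‖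
        ≤ μ * h * ‖l‖ * |t - (t - h)| := this
      _ = μ * h ^ 2 * ‖l‖ := by
          rw [show t - (t - h) = h by ring, abs_of_nonneg hh.le]; ring
  · apply Continuous.intervalIntegrable
    fun_prop
end

section
/- Let δ > 1/2 and γ ∈ [0,1) satisfy 2γ + 1/δ < 2; let h ∈ (0,1] and t ≥ h, and set n := ⌈h^{−1/δ}⌉. Let μ ≥ 0, and let (λ_k)_{k≥1} be nonzero complex numbers with |exp(λ_k s)| ≤ μ for all s ≥ 0 and all k. Let Γ̂ > 0 and Γ̌ > 0 satisfy |λ_k| ≤ Γ̂ k^δ for all k ≥ 1 and |λ_k| ≥ Γ̌ k^δ for all k > n. Let (c_k)_{k≥1} be nonnegative reals with M_C := sup_k c_k / |λ_k|^γ < ∞, and let (α_k)_{k≥1} be reals with Σ_k |λ_k|² α_k² < ∞. Then, writing I_k := ∫_{t−h}^t exp(λ_k s) ds − ∫_t^{t+h} exp(λ_k s) ds, the sum S := Σ_{k=1}^{∞} (|α_k|/2) · c_k · |I_k| converges and satisfies S² ≤ 2 μ² · (Σ_{k=1}^{∞} |λ_k|² α_k²) · M_C² · max( 9^δ Γ̂^{2γ}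 / 4 , 4 / Γ̌^{4−2γ} ) · h^{4 − 2γ − 1/δ}. -/
open Finset

lemma stmt9_int_bound {lam : ℂ} {μ a b : ℝ} (hab : a ≤ b) (ha : 0 ≤ a)
    (hexp : ∀ s : ℝ, 0 ≤ s → norm (Complex.exp (lam * s)) ≤ μ) :
    norm (∫ s in a..b, Complex.exp (lam * s)) ≤ μ * (b - a) := by
  have h1 : ‖∫ s in a..b, Complex.exp (lam * s)‖ ≤ μ * |b - a| := by
    apply intervalIntegral.norm_integral_le_of_norm_le_const
    intro x hx
    rw [Set.uIoc_of_le hab] at hx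
    exact hexp x (ha.trans hx.1.le)
  rwa [abs_of_nonneg (by linarith)] at h1

lemma stmt9_tail {lam : ℂ} {μ h t : ℝ} (hlam : lam ≠ 0) (hh : 0 < h) (hht : h ≤ t)
    (hexp : ∀ s : ℝ, 0 ≤ s → norm (Complex.exp (lam * s)) ≤ μ) :
    norm ((∫ s in (t - h)..t, Complex.exp (lam * s)) -
        ∫ s in t..(t + h), Complex.exp (lam * s)) ≤ 4 * μ / norm lam := by
  rw [integral_exp_mul_complex hlam, integral_exp_mul_complex hlam, div_sub_div_same, norm_div]
  gcongr
  have e1 := hexp t (by linarith)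
  have e2 := hexp (t - h) (by linarith)
  have e3 := hexp (t + h) (by linarith)
  calc norm (Complex.exp (lam * t) - Complex.exp (lam * ((t-h):ℝ)) -
        (Complex.exp (lam * ((t+h):ℝ)) - Complex.exp (lam * t)))
      ≤ norm (Complex.exp (lam * t) - Complex.exp (lam * ((t-h):ℝ))) +
        norm (Complex.exp (lam * ((t+h):ℝ)) - Complex.exp (lam * t)) := by
        exact norm_sub_le _ _
    _ ≤ (norm (Complex.exp (lam * t)) + norm (Complex.exp (lam * ((t-h):ℝ)))) +
        (norm (Complex.exp (lam * ((t+h):ℝ))) + norm (Complex.exp (lam * t))) := by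
        gcongr <;> exact norm_sub_le _ _
    _ ≤ 4 * μ := by push_cast at e1 e2 e3 ⊢; linarith

lemma stmt9_head {lam : ℂ} {μ h t : ℝ} (hlam : lam ≠ 0) (hh : 0 < h) (hht : h ≤ t) (hμ : 0 ≤ μ)
    (hexp : ∀ s : ℝ, 0 ≤ s → norm (Complex.exp (lam * s)) ≤ μ) :
    norm ((∫ s in (t - h)..t, Complex.exp (lam * s)) -
        ∫ s in t..(t + h), Complex.exp (lam * s)) ≤ norm lam * μ * h ^ 2 := by
  have hth : (0:ℝ) ≤ t - h := by linarith
  have hcont : Continuous fun s : ℝ => Complex.exp (lam * s) := by fun_prop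
  have h2 : (∫ s in t..(t + h), Complex.exp (lam * s))
      = ∫ s in (t - h)..t, Complex.exp (lam * ((s + h : ℝ) : ℂ)) := by
    rw [intervalIntegral.integral_comp_add_right (fun s : ℝ => Complex.exp (lam * s)) h]
    norm_num
  have hint1 : IntervalIntegrable (fun s : ℝ => Complex.exp (lam * s))
      MeasureTheory.volume (t - h) t := hcont.intervalIntegrable _ _
  have hint2 : IntervalIntegrable (fun s : ℝ => Complex.exp (lam * ((s + h : ℝ) : ℂ)))
      MeasureTheory.volume (t - h) t := by
    have : Continuous fun s : ℝ => Complex.exp (lam * ((s + h : ℝ) : ℂ)) := by fun_prop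
    exact this.intervalIntegrable _ _
  rw [h2, ← intervalIntegral.integral_sub hint1 hint2]
  have key : ‖∫ s in (t - h)..t,
      (Complex.exp (lam * s) - Complex.exp (lam * ((s + h : ℝ) : ℂ)))‖
      ≤ (norm lam * (μ * h)) * |t - (t - h)| := by
    apply intervalIntegral.norm_integral_le_of_norm_le_const
    intro x hx
    rw [Set.uIoc_of_le (by linarith : t - h ≤ t)] at hx
    have hx0 : (0:ℝ) ≤ x := le_trans hth hx.1.le
    have hid : Complex.exp (lam * x) - Complex.exp (lam * ((x + h : ℝ) : ℂ))
        = -(lam * ∫ u in x..(x + h), Complex.exp (lam * u)) := by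
      rw [integral_exp_mul_complex hlam]
      field_simp
      ring
    rw [hid, norm_neg, norm_mul]
    gcongr
    exact stmt9_int_bound (by linarith) hx0 hexp |>.trans_eq (by ring)
  calc norm _ ≤ (norm lam * (μ * h)) * |t - (t - h)| := key
    _ = norm lam * μ * h ^ 2 := by
        rw [show t - (t - h) = h by ring, abs_of_pos hh]; ring

lemma stmt9_step {p : ℝ} (hp : 2 ≤ p) {x : ℝ} (hx : 1 ≤ x) :
    (p - 1) * ((x + 1) ^ p)⁻¹ ≤ (x ^ (p - 1))⁻¹ - ((x + 1) ^ (p - 1))⁻¹ := by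
  have hx0 : (0:ℝ) < x := by linarith
  have hx10 : (0:ℝ) < x + 1 := by linarith
  have hq : 1 ≤ p - 1 := by linarith
  have hb := one_add_mul_self_le_rpow_one_add (s := 1/x) (p := p - 1)
    (le_trans (by norm_num : (-1:ℝ) ≤ 0) (by positivity)) hq
  rw [show (1:ℝ) + 1 / x = (x + 1) / x by field_simp,
    Real.div_rpow (by linarith) hx0.le] at hb
  set A := x ^ (p - 1) with hA
  set B := (x + 1) ^ (p - 1) with hB
  have hA0 : 0 < A := Real.rpow_pos_of_pos hx0 _
  have hB0 : 0 < B := Real.rpow_pos_of_pos hx10 _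
  have hpp : (x + 1) ^ p = B * (x + 1) := by
    rw [hB, ← Real.rpow_add_one hx10.ne']
    norm_num
  have hb' : A * x + (p - 1) * A ≤ B * x := by
    rw [le_div_iff₀ hA0] at hb
    have := mul_le_mul_of_nonneg_right hb hx0.le
    calc A * x + (p-1) * A = (1 + (p - 1) * (1 / x)) * A * x := by field_simp
      _ ≤ B * x := this
  have hBA : 0 < B - A := by nlinarith
  have h1 : A⁻¹ - B⁻¹ = (B - A) / (A * B) := by field_simp
  rw [hpp, h1, show (p-1) * (B*(x+1))⁻¹ = (p-1)/(B*(x+1)) by ring,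
    div_le_div_iff₀ (by positivity) (by positivity)]
  nlinarith [mul_le_mul_of_nonneg_right hb' hB0.le, mul_pos hB0 hBA]

lemma stmt9_tailsum {p : ℝ} (hp : 2 ≤ p) {n : ℕ} (hn : 1 ≤ n) (N : ℕ) :
    ∑ k ∈ Finset.Ico (n+1) N, (((k:ℕ):ℝ) ^ p)⁻¹ ≤ ((n:ℝ) ^ (p - 1))⁻¹ := by
  have hq : (0:ℝ) < p - 1 := by linarith
  set F : ℕ → ℝ := fun i => (((n + i : ℕ):ℝ) ^ (p-1))⁻¹ / (p-1) with hF
  have hF0 : ∀ i, 0 ≤ F i := by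
    intro i
    apply div_nonneg _ hq.le
    positivity
  have hstep : ∀ i : ℕ, (((n + 1 + i : ℕ):ℝ) ^ p)⁻¹ ≤ F i - F (i+1) := by
    intro i
    have hx : (1:ℝ) ≤ ((n + i : ℕ):ℝ) := by
      have : 1 ≤ n + i := le_trans hn (Nat.le_add_right _ _)
      exact_mod_cast this
    have hs := stmt9_step hp hx
    have hcast : ((n + 1 + i : ℕ):ℝ) = ((n + i : ℕ):ℝ) + 1 := by push_cast; ring
    have hcast2 : ((n + (i+1) : ℕ):ℝ) = ((n + i : ℕ):ℝ) + 1 := by push_cast; ring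
    rw [hcast, hF]
    simp only [hcast2]
    rw [div_sub_div_same, le_div_iff₀ hq]
    linarith [hs]
  calc ∑ k ∈ Finset.Ico (n+1) N, (((k:ℕ):ℝ) ^ p)⁻¹
      = ∑ i ∈ Finset.range (N - (n+1)), (((n + 1 + i : ℕ):ℝ) ^ p)⁻¹ := by
        rw [Finset.sum_Ico_eq_sum_range]
    _ ≤ ∑ i ∈ Finset.range (N - (n+1)), (F i - F (i+1)) :=
        Finset.sum_le_sum fun i _ => hstep i
    _ = F 0 - F (N - (n+1)) := Finset.sum_range_sub' F _
    _ ≤ F 0 := by linarith [hF0 (N - (n+1))]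
    _ ≤ ((n:ℝ) ^ (p - 1))⁻¹ := by
        rw [hF]
        simp only [Nat.add_zero]
        exact div_le_self (by positivity) (by linarith)



set_option maxHeartbeats 1000000 in
/-- Core spectral estimate of Theorem 3.1: with eigenvalues `λ_k` (`|λ_k| ≍ k^δ`),
observation norms `c_k ≤ M_C |λ_k|^γ` and coefficients `α_k` with `Σ |λ_k|² α_k² < ∞`,
the sum `S = Σ_k (|α_k|/2) c_k |I_k|` of the centered-difference exponential integrals
converges and `S² ≤ 2 μ² (Σ |λ_k|² α_k²) M_C² max(9^δ Γ̂^{2γ}/4, 4/Γ̌^{4−2γ}) h^{4−2γ−1/δ}`. -/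
theorem stmt9 (δ γ h t μ Γhat Γcheck MC : ℝ)
    (hδ : 1 / 2 < δ) (hγ0 : 0 ≤ γ) (hγ1 : γ < 1) (hcond : 2 * γ + 1 / δ < 2)
    (hh0 : 0 < h) (hh1 : h ≤ 1) (hht : h ≤ t)
    (hμ : 0 ≤ μ) (hΓhat : 0 < Γhat) (hΓcheck : 0 < Γcheck)
    (lam : ℕ+ → ℂ) (hlam0 : ∀ k, lam k ≠ 0)
    (hexp : ∀ (k : ℕ+) (s : ℝ), 0 ≤ s → norm (Complex.exp (lam k * s)) ≤ μ)
    (hupper : ∀ k : ℕ+, norm (lam k) ≤ Γhat * (k : ℝ) ^ δ)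
    (hlower : ∀ k : ℕ+, Nat.ceil (h ^ (-(1 / δ))) < (k : ℕ) →
      Γcheck * (k : ℝ) ^ δ ≤ norm (lam k))
    (c : ℕ+ → ℝ) (hc : ∀ k, 0 ≤ c k)
    (hMC : ∀ k, c k ≤ MC * norm (lam k) ^ γ)
    (α : ℕ+ → ℝ)
    (hα : Summable (fun k : ℕ+ => norm (lam k) ^ 2 * α k ^ 2)) :
    Summable (fun k : ℕ+ => (|α k| / 2) * c k *
        norm ((∫ s in (t - h)..t, Complex.exp (lam k * s)) -
          ∫ s in t..(t + h), Complex.exp (lam k * s))) ∧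
    (∑' k : ℕ+, (|α k| / 2) * c k *
        norm ((∫ s in (t - h)..t, Complex.exp (lam k * s)) -
          ∫ s in t..(t + h), Complex.exp (lam k * s))) ^ 2 ≤
      2 * μ ^ 2 * (∑' k : ℕ+, norm (lam k) ^ 2 * α k ^ 2) * MC ^ 2 *
        max ((9 : ℝ) ^ δ * Γhat ^ (2 * γ) / 4) (4 / Γcheck ^ (4 - 2 * γ)) *
        h ^ (4 - 2 * γ - 1 / δ) := by
  classical
  have hδ0 : (0:ℝ) < δ := by linarith
  -- the cutoff
  set x : ℝ := h ^ (-(1 / δ)) with hx_def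
  have hx0 : 0 < x := Real.rpow_pos_of_pos hh0 _
  have hx1 : 1 ≤ x := by
    calc (1:ℝ) = h ^ (0:ℝ) := (Real.rpow_zero h).symm
      _ ≤ x := Real.rpow_le_rpow_of_exponent_ge hh0 hh1 (neg_nonpos.mpr (by positivity))
  set n : ℕ := Nat.ceil x with hn_def
  have hn1 : 1 ≤ n := Nat.one_le_ceil_iff.mpr hx0
  have hnx : x ≤ (n:ℝ) := Nat.le_ceil x
  have hn2 : (n:ℝ) ≤ 2 * x := by
    have := Nat.ceil_lt_add_one hx0.le
    rw [← hn_def] at this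
    linarith
  have hn0 : (0:ℝ) < (n:ℝ) := by exact_mod_cast hn1
  -- exponent arithmetic
  have he : 2*γ*δ + 1 < 2*δ := by
    have h2 : 1/δ < 2 - 2*γ := by linarith
    have h3 := (div_lt_iff₀ hδ0).mp h2
    nlinarith
  set p : ℝ := δ * (4 - 2*γ) with hp_def
  have hp2 : 2 < p := by nlinarith
  -- basic facts
  have hL : ∀ k : ℕ+, 0 < norm (lam k) := fun k => norm_pos_iff.mpr (hlam0 k)
  have hMC0 : 0 ≤ MC := by
    have h1 := (hc 1).trans (hMC 1)
    have h2 : 0 < norm (lam 1) ^ γ := Real.rpow_pos_of_pos (hL 1) γ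
    exact (mul_nonneg_iff_of_pos_right h2).mp h1
  -- abbreviations
  set a : ℕ+ → ℝ := fun k => |α k| * norm (lam k) with ha_def
  set b : ℕ+ → ℝ := fun k => c k * norm ((∫ s in (t - h)..t, Complex.exp (lam k * s)) -
      ∫ s in t..(t + h), Complex.exp (lam k * s)) / (2 * norm (lam k)) with hb_def
  have ha0 : ∀ k, 0 ≤ a k := fun k => mul_nonneg (abs_nonneg _) (hL k).le
  have hb0 : ∀ k, 0 ≤ b k := fun k =>
    div_nonneg (mul_nonneg (hc k) (norm_nonneg _)) (by positivity)
  have hterm : ∀ k : ℕ+, (|α k| / 2) * c k *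
      norm ((∫ s in (t - h)..t, Complex.exp (lam k * s)) -
        ∫ s in t..(t + h), Complex.exp (lam k * s)) = a k * b k := by
    intro k
    rw [ha_def, hb_def]
    have := (hL k).ne'
    field_simp
  -- the dominating sequence
  set Dn : ℕ → ℝ := fun m => if m ≤ n then
      μ^2 * MC^2 * Γhat ^ (2*γ) * h ^ (4:ℝ) / 4 * ((m:ℕ):ℝ) ^ (2*γ*δ)
    else 4 * μ^2 * MC^2 / Γcheck ^ (4 - 2*γ) * (((m:ℕ):ℝ) ^ p)⁻¹ with hDn_def
  have hDn0 : ∀ m, 0 ≤ Dn m := by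
    intro m
    rw [hDn_def]
    dsimp only
    split_ifs <;> positivity
  -- pointwise bound b² ≤ Dn
  have hbD : ∀ k : ℕ+, b k ^ 2 ≤ Dn (k:ℕ) := by
    intro k
    have hLk : 0 < norm (lam k) := hL k
    have hk0 : (0:ℝ) < ((k:ℕ):ℝ) := by exact_mod_cast k.pos
    rw [hDn_def]
    dsimp only
    split_ifs with hkn
    · -- head: k ≤ n
      have hIb := stmt9_head (hlam0 k) hh0 hht hμ (fun s hs => hexp k s hs)
      have hbb : b k ≤ MC * μ * h^2 * norm (lam k) ^ γ / 2 := by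
        rw [hb_def]
        dsimp only
        have hck := hc k
        calc c k * norm ((∫ s in (t - h)..t, Complex.exp (lam k * s)) -
              ∫ s in t..(t + h), Complex.exp (lam k * s)) / (2 * norm (lam k))
            ≤ (MC * norm (lam k) ^ γ) * (norm (lam k) * μ * h ^ 2) /
              (2 * norm (lam k)) := by
              gcongr
              exact hMC k
          _ = MC * μ * h^2 * norm (lam k) ^ γ / 2 := by
              field_simp
      have hsq : b k ^ 2 ≤ (MC * μ * h^2 * norm (lam k) ^ γ / 2)^2 :=
        pow_le_pow_left₀ (hb0 k) hbb 2
      have hrw : (MC * μ * h^2 * norm (lam k) ^ γ / 2)^2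
          = μ^2 * MC^2 * h ^ (4:ℝ) / 4 * norm (lam k) ^ (2*γ) := by
        rw [show (2*γ) = γ * (2:ℕ) by push_cast; ring, Real.rpow_mul hLk.le,
          Real.rpow_natCast, show ((4:ℝ):ℝ) = ((4:ℕ):ℝ) by norm_num, Real.rpow_natCast]
        ring
      have hup : norm (lam k) ^ (2*γ) ≤ (Γhat * ((k:ℕ):ℝ) ^ δ) ^ (2*γ) :=
        Real.rpow_le_rpow hLk.le (hupper k) (by positivity)
      have hup2 : (Γhat * ((k:ℕ):ℝ) ^ δ) ^ (2*γ) = Γhat ^ (2*γ) * ((k:ℕ):ℝ) ^ (2*γ*δ) := by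
        rw [Real.mul_rpow hΓhat.le (by positivity), ← Real.rpow_mul hk0.le,
          show δ * (2*γ) = 2*γ*δ by ring]
      calc b k ^ 2 ≤ μ^2 * MC^2 * h ^ (4:ℝ) / 4 * norm (lam k) ^ (2*γ) := by
            rw [← hrw]; exact hsq
        _ ≤ μ^2 * MC^2 * h ^ (4:ℝ) / 4 * (Γhat ^ (2*γ) * ((k:ℕ):ℝ) ^ (2*γ*δ)) := by
            rw [← hup2]; gcongr
        _ = μ^2 * MC^2 * Γhat ^ (2*γ) * h ^ (4:ℝ) / 4 * ((k:ℕ):ℝ) ^ (2*γ*δ) := by ring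
    · -- tail: k > n
      push_neg at hkn
      have hlow := hlower k hkn
      have hIb := stmt9_tail (hlam0 k) hh0 hht (fun s hs => hexp k s hs)
      have hbb : b k ≤ 2 * MC * μ * norm (lam k) ^ γ / norm (lam k) ^ (2:ℕ) := by
        rw [hb_def]
        dsimp only
        have hck := hc k
        calc c k * norm ((∫ s in (t - h)..t, Complex.exp (lam k * s)) -
              ∫ s in t..(t + h), Complex.exp (lam k * s)) / (2 * norm (lam k))
            ≤ (MC * norm (lam k) ^ γ) * (4 * μ / norm (lam k)) /
              (2 * norm (lam k)) := by
              gcongr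
              exact hMC k
          _ = 2 * MC * μ * norm (lam k) ^ γ / norm (lam k) ^ (2:ℕ) := by
              field_simp
              ring
      have hsq : b k ^ 2 ≤ (2 * MC * μ * norm (lam k) ^ γ / norm (lam k) ^ (2:ℕ))^2 :=
        pow_le_pow_left₀ (hb0 k) hbb 2
      have hrw : (2 * MC * μ * norm (lam k) ^ γ / norm (lam k) ^ (2:ℕ))^2
          = 4 * μ^2 * MC^2 * (norm (lam k) ^ (4 - 2*γ))⁻¹ := by
        rw [show (4 - 2*γ) = (4:ℝ) - 2*γ by norm_num, Real.rpow_sub hLk,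
          show (2*γ) = γ * (2:ℕ) by push_cast; ring, Real.rpow_mul hLk.le, Real.rpow_natCast,
          show ((4:ℝ):ℝ) = ((4:ℕ):ℝ) by norm_num, Real.rpow_natCast]
        have h1 : norm (lam k) ^ (4:ℕ) ≠ 0 := by positivity
        have h2 : (norm (lam k) ^ γ) ^ (2:ℕ) ≠ 0 := by positivity
        field_simp
        ring
      have hlow2 : (Γcheck * ((k:ℕ):ℝ) ^ δ) ^ (4 - 2*γ) ≤ norm (lam k) ^ (4 - 2*γ) :=
        Real.rpow_le_rpow (by positivity) hlow (by linarith)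
      have hlow3 : (Γcheck * ((k:ℕ):ℝ) ^ δ) ^ (4 - 2*γ)
          = Γcheck ^ (4 - 2*γ) * ((k:ℕ):ℝ) ^ p := by
        rw [Real.mul_rpow hΓcheck.le (by positivity), ← Real.rpow_mul hk0.le, hp_def]
      have hinv : (norm (lam k) ^ (4 - 2*γ))⁻¹
          ≤ (Γcheck ^ (4 - 2*γ) * ((k:ℕ):ℝ) ^ p)⁻¹ := by
        rw [← hlow3]
        exact inv_anti₀ (by positivity) hlow2
      calc b k ^ 2 ≤ 4 * μ^2 * MC^2 * (norm (lam k) ^ (4 - 2*γ))⁻¹ := by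
            rw [← hrw]; exact hsq
        _ ≤ 4 * μ^2 * MC^2 * (Γcheck ^ (4 - 2*γ) * ((k:ℕ):ℝ) ^ p)⁻¹ := by gcongr
        _ = 4 * μ^2 * MC^2 / Γcheck ^ (4 - 2*γ) * (((k:ℕ):ℝ) ^ p)⁻¹ := by
            rw [mul_inv]
            ring
  -- bound on partial sums of the dominating sequence
  set Bd : ℝ := μ^2 * MC^2 * Γhat ^ (2*γ) * h ^ (4:ℝ) / 4 * ((n:ℝ) * (n:ℝ)^(2*γ*δ))
      + 4 * μ^2 * MC^2 / Γcheck ^ (4 - 2*γ) * ((n:ℝ)^(p-1))⁻¹ with hBd_def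
  have hpartial : ∀ s : Finset ℕ+, ∑ k ∈ s, Dn (k:ℕ) ≤ Bd := by
    intro s
    set N : ℕ := max ((s.sup PNat.val) + 1) (n+1) with hN_def
    have hsub : s.image PNat.val ⊆ Finset.Ico 1 N := by
      intro m hm
      simp only [Finset.mem_image] at hm
      obtain ⟨k, hk, rfl⟩ := hm
      simp only [Finset.mem_Ico]
      refine ⟨k.pos, ?_⟩
      calc k.val < s.sup PNat.val + 1 := Nat.lt_succ_of_le (Finset.le_sup hk)
        _ ≤ N := le_max_left _ _
    have h1 : ∑ k ∈ s, Dn (k:ℕ) = ∑ m ∈ s.image PNat.val, Dn m :=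
      (Finset.sum_image (fun x _ y _ hxy => PNat.coe_injective hxy)).symm
    have h2 : ∑ m ∈ s.image PNat.val, Dn m ≤ ∑ m ∈ Finset.Ico 1 N, Dn m :=
      Finset.sum_le_sum_of_subset_of_nonneg hsub (fun m _ _ => hDn0 m)
    have hsplit : ∑ m ∈ Finset.Ico 1 (n+1), Dn m + ∑ m ∈ Finset.Ico (n+1) N, Dn m
        = ∑ m ∈ Finset.Ico 1 N, Dn m :=
      Finset.sum_Ico_consecutive _ (by omega) (le_max_right _ _)
    have hhead : ∑ m ∈ Finset.Ico 1 (n+1), Dn m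
        ≤ μ^2 * MC^2 * Γhat ^ (2*γ) * h ^ (4:ℝ) / 4 * ((n:ℝ) * (n:ℝ)^(2*γ*δ)) := by
      have hb1 : ∀ m ∈ Finset.Ico 1 (n+1), Dn m ≤
          μ^2 * MC^2 * Γhat ^ (2*γ) * h ^ (4:ℝ) / 4 * (n:ℝ)^(2*γ*δ) := by
        intro m hm
        rw [Finset.mem_Ico] at hm
        have hmn : m ≤ n := by omega
        rw [hDn_def]
        dsimp only
        rw [if_pos hmn]
        have : ((m:ℕ):ℝ) ^ (2*γ*δ) ≤ (n:ℝ)^(2*γ*δ) :=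
          Real.rpow_le_rpow (by positivity) (by exact_mod_cast hmn) (by positivity)
        exact mul_le_mul_of_nonneg_left this (by positivity)
      calc ∑ m ∈ Finset.Ico 1 (n+1), Dn m
          ≤ (Finset.Ico 1 (n+1)).card •
            (μ^2 * MC^2 * Γhat ^ (2*γ) * h ^ (4:ℝ) / 4 * (n:ℝ)^(2*γ*δ)) :=
            Finset.sum_le_card_nsmul _ _ _ hb1
        _ = μ^2 * MC^2 * Γhat ^ (2*γ) * h ^ (4:ℝ) / 4 * ((n:ℝ) * (n:ℝ)^(2*γ*δ)) := by
            rw [Nat.card_Ico, nsmul_eq_mul]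
            norm_num
            ring
    have htail : ∑ m ∈ Finset.Ico (n+1) N, Dn m
        ≤ 4 * μ^2 * MC^2 / Γcheck ^ (4 - 2*γ) * ((n:ℝ)^(p-1))⁻¹ := by
      have heq : ∀ m ∈ Finset.Ico (n+1) N, Dn m
          = 4 * μ^2 * MC^2 / Γcheck ^ (4 - 2*γ) * (((m:ℕ):ℝ)^p)⁻¹ := by
        intro m hm
        rw [Finset.mem_Ico] at hm
        rw [hDn_def]
        dsimp only
        rw [if_neg (by omega)]
      rw [Finset.sum_congr rfl heq, ← Finset.mul_sum]
      exact mul_le_mul_of_nonneg_left (stmt9_tailsum hp2.le hn1 N) (by positivity)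
    rw [h1]
    calc ∑ m ∈ s.image PNat.val, Dn m ≤ ∑ m ∈ Finset.Ico 1 N, Dn m := h2
      _ = ∑ m ∈ Finset.Ico 1 (n+1), Dn m + ∑ m ∈ Finset.Ico (n+1) N, Dn m := hsplit.symm
      _ ≤ Bd := add_le_add hhead htail
  -- summability
  have hDsum : Summable (fun k : ℕ+ => Dn (k:ℕ)) :=
    summable_of_sum_le (fun k => hDn0 _) hpartial
  have hDt : ∑' k : ℕ+, Dn (k:ℕ) ≤ Bd := Summable.tsum_le_of_sum_le hDsum hpartial
  have hb2sum : Summable (fun k => b k ^ 2) :=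
    Summable.of_nonneg_of_le (fun k => sq_nonneg _) hbD hDsum
  have hb2t : ∑' k, b k ^ 2 ≤ Bd := le_trans (Summable.tsum_le_tsum hbD hb2sum hDsum) hDt
  have ha2 : Summable (fun k => a k ^ 2) := by
    refine hα.congr fun k => ?_
    rw [ha_def]
    dsimp only
    rw [mul_pow, sq_abs]
    ring
  have hAeq : (∑' k : ℕ+, norm (lam k) ^ 2 * α k ^ 2) = ∑' k, a k ^ 2 := by
    refine tsum_congr fun k => ?_
    rw [ha_def]
    dsimp only
    rw [mul_pow, sq_abs]
    ring
  clear_value a b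
  have habsum : Summable (fun k => a k * b k) := by
    refine Summable.of_nonneg_of_le (fun k => mul_nonneg (ha0 k) (hb0 k)) (fun k => ?_)
      (((ha2.add hb2sum).mul_left (1/2)))
    nlinarith [sq_nonneg (a k - b k)]
  have hS0 : 0 ≤ ∑' k, a k * b k := tsum_nonneg fun k => mul_nonneg (ha0 k) (hb0 k)
  have hA0 : 0 ≤ ∑' k, a k ^ 2 := tsum_nonneg fun k => sq_nonneg _
  have hB0 : 0 ≤ ∑' k, b k ^ 2 := tsum_nonneg fun k => sq_nonneg _
  have hCS : ∑' k, a k * b k ≤ Real.sqrt (∑' k, a k ^ 2) * Real.sqrt (∑' k, b k ^ 2) := by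
    apply Summable.tsum_le_of_sum_le habsum
    intro s
    calc ∑ k ∈ s, a k * b k
        ≤ Real.sqrt (∑ k ∈ s, a k ^ 2) * Real.sqrt (∑ k ∈ s, b k ^ 2) :=
          Real.sum_mul_le_sqrt_mul_sqrt s a b
      _ ≤ Real.sqrt (∑' k, a k ^ 2) * Real.sqrt (∑' k, b k ^ 2) := by
          have s1 := Summable.sum_le_tsum s (fun k _ => sq_nonneg (a k)) ha2
          have s2 := Summable.sum_le_tsum s (fun k _ => sq_nonneg (b k)) hb2sum
          gcongr
  -- bound Bd by the target constant
  set Mx : ℝ := max ((9 : ℝ) ^ δ * Γhat ^ (2 * γ) / 4) (4 / Γcheck ^ (4 - 2 * γ)) with hMx_def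
  set E : ℝ := 4 - 2 * γ - 1 / δ with hE_def
  have hpart1 : μ^2 * MC^2 * Γhat ^ (2*γ) * h ^ (4:ℝ) / 4 * ((n:ℝ) * (n:ℝ)^(2*γ*δ))
      ≤ μ^2 * MC^2 * ((9:ℝ)^δ * Γhat ^ (2*γ) / 4) * h ^ E := by
    have e1 : (n:ℝ) * (n:ℝ)^(2*γ*δ) = (n:ℝ) ^ (1 + 2*γ*δ) := by
      rw [Real.rpow_add hn0, Real.rpow_one]
    have e2 : (n:ℝ) ^ (1 + 2*γ*δ) ≤ (2*x) ^ (1 + 2*γ*δ) :=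
      Real.rpow_le_rpow hn0.le hn2 (by positivity)
    have e3 : (2*x) ^ (1 + 2*γ*δ) = 2 ^ (1 + 2*γ*δ) * x ^ (1 + 2*γ*δ) :=
      Real.mul_rpow (by norm_num) hx0.le
    have e24 : ((2:ℝ)^(2:ℝ)) = 4 := by
      have := Real.rpow_natCast (2:ℝ) 2
      norm_num at this
      linarith
    have e4 : (2:ℝ) ^ (1 + 2*γ*δ) ≤ (9:ℝ) ^ δ := by
      calc (2:ℝ) ^ (1 + 2*γ*δ) ≤ 2 ^ (2*δ) :=
          Real.rpow_le_rpow_of_exponent_le one_le_two (by linarith)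
        _ = ((2:ℝ)^(2:ℝ)) ^ δ := by rw [← Real.rpow_mul (by norm_num)]
        _ = (4:ℝ) ^ δ := by rw [e24]
        _ ≤ (9:ℝ) ^ δ := Real.rpow_le_rpow (by norm_num) (by norm_num) hδ0.le
    have e5 : x ^ (1 + 2*γ*δ) = h ^ ((-(1/δ)) * (1 + 2*γ*δ)) := by
      rw [hx_def]
      exact (Real.rpow_mul hh0.le _ _).symm
    have e6 : h ^ (4:ℝ) * h ^ ((-(1/δ)) * (1 + 2*γ*δ)) = h ^ E := by
      rw [← Real.rpow_add hh0]
      congr 1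
      rw [hE_def]
      field_simp [hδ0.ne']
      ring
    have hxq : (0:ℝ) ≤ x ^ (1 + 2*γ*δ) := (Real.rpow_pos_of_pos hx0 _).le
    calc μ^2 * MC^2 * Γhat ^ (2*γ) * h ^ (4:ℝ) / 4 * ((n:ℝ) * (n:ℝ)^(2*γ*δ))
        = μ^2 * MC^2 * Γhat ^ (2*γ) * h ^ (4:ℝ) / 4 * (n:ℝ) ^ (1 + 2*γ*δ) := by rw [e1]
      _ ≤ μ^2 * MC^2 * Γhat ^ (2*γ) * h ^ (4:ℝ) / 4 * (2 ^ (1 + 2*γ*δ) * x ^ (1 + 2*γ*δ)) := by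
          rw [← e3]
          exact mul_le_mul_of_nonneg_left e2 (by positivity)
      _ ≤ μ^2 * MC^2 * Γhat ^ (2*γ) * h ^ (4:ℝ) / 4 * ((9:ℝ)^δ * x ^ (1 + 2*γ*δ)) := by
          have := mul_le_mul_of_nonneg_right e4 hxq
          exact mul_le_mul_of_nonneg_left this (by positivity)
      _ = μ^2 * MC^2 * ((9:ℝ)^δ * Γhat ^ (2*γ) / 4) * (h ^ (4:ℝ) * h ^ ((-(1/δ)) * (1 + 2*γ*δ))) := by
          rw [e5]
          ring
      _ = μ^2 * MC^2 * ((9:ℝ)^δ * Γhat ^ (2*γ) / 4) * h ^ E := by rw [e6]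
  have hpart2 : 4 * μ^2 * MC^2 / Γcheck ^ (4 - 2*γ) * ((n:ℝ)^(p-1))⁻¹
      ≤ μ^2 * MC^2 * (4 / Γcheck ^ (4 - 2*γ)) * h ^ E := by
    have e7 : ((n:ℝ)^(p-1))⁻¹ ≤ (x^(p-1))⁻¹ :=
      inv_anti₀ (Real.rpow_pos_of_pos hx0 _)
        (Real.rpow_le_rpow hx0.le hnx (by linarith))
    have e8 : (x^(p-1))⁻¹ = h ^ E := by
      rw [hx_def, ← Real.rpow_mul hh0.le, ← Real.rpow_neg hh0.le]
      congr 1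
      rw [hE_def, hp_def]
      field_simp
    calc 4 * μ^2 * MC^2 / Γcheck ^ (4 - 2*γ) * ((n:ℝ)^(p-1))⁻¹
        ≤ 4 * μ^2 * MC^2 / Γcheck ^ (4 - 2*γ) * (x^(p-1))⁻¹ :=
          mul_le_mul_of_nonneg_left e7 (by positivity)
      _ = μ^2 * MC^2 * (4 / Γcheck ^ (4 - 2*γ)) * h ^ E := by rw [e8]; ring
  have hhE0 : (0:ℝ) ≤ h ^ E := (Real.rpow_pos_of_pos hh0 _).le
  have hBdle : Bd ≤ 2 * μ^2 * MC^2 * Mx * h ^ E := by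
    have m1 : (9:ℝ)^δ * Γhat ^ (2*γ) / 4 ≤ Mx := le_max_left _ _
    have m2 : 4 / Γcheck ^ (4 - 2*γ) ≤ Mx := le_max_right _ _
    have hc0 : (0:ℝ) ≤ μ^2 * MC^2 * h ^ E := by positivity
    have t1 := mul_le_mul_of_nonneg_left m1 hc0
    have t2 := mul_le_mul_of_nonneg_left m2 hc0
    rw [hBd_def]
    nlinarith [hpart1, hpart2]
  constructor
  · exact habsum.congr fun k => (hterm k).symm
  · rw [tsum_congr hterm, hAeq]
    calc (∑' k, a k * b k) ^ 2
        ≤ (Real.sqrt (∑' k, a k ^ 2) * Real.sqrt (∑' k, b k ^ 2)) ^ 2 :=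
          pow_le_pow_left₀ hS0 hCS 2
      _ = (∑' k, a k ^ 2) * (∑' k, b k ^ 2) := by
          rw [mul_pow, Real.sq_sqrt hA0, Real.sq_sqrt hB0]
      _ ≤ (∑' k, a k ^ 2) * (2 * μ^2 * MC^2 * Mx * h ^ E) :=
          mul_le_mul_of_nonneg_left (hb2t.trans hBdle) hA0
      _ = 2 * μ ^ 2 * (∑' k, a k ^ 2) * MC ^ 2 * Mx * h ^ E := by ring
end

section
/- Let E be a real Banach space, K ≥ 0, and let f : ℝ → E be differentiable on (0, ∞) with ‖f′(s)‖ ≤ K / s for all s > 0. Then for all 0 < h < t, ‖D(f,t,h)‖ ≤ K h² / (t − h). -/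
/-- If `f` is differentiable on `(0,∞)` with `‖f′(s)‖ ≤ K/s`, then for `0 < h < t` the
centered difference satisfies `‖D(f,t,h)‖ ≤ K h² / (t − h)`. -/
theorem stmt11 {E : Type*} [NormedAddCommGroup E] [NormedSpace ℝ E] [CompleteSpace E]
    (f f' : ℝ → E) (K t h : ℝ) (hK : 0 ≤ K)
    (hderiv : ∀ s : ℝ, 0 < s → HasDerivAt f (f' s) s)
    (hbound : ∀ s : ℝ, 0 < s → ‖f' s‖ ≤ K / s)
    (hh : 0 < h) (hht : h < t) :
    ‖(∫ s in (t - h)..t, f s) - ∫ s in t..(t + h), f s‖ ≤ K * h ^ 2 / (t - h) := by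
  have hth : 0 < t - h := by linarith
  have hcont : ContinuousOn f (Set.Ioi (0:ℝ)) := fun x hx =>
    (hderiv x hx).continuousAt.continuousWithinAt
  have hint1 : IntervalIntegrable f MeasureTheory.volume (t - h) t := by
    apply ContinuousOn.intervalIntegrable
    apply hcont.mono
    intro x hx
    rw [Set.uIcc_of_le (by linarith)] at hx
    exact lt_of_lt_of_le hth hx.1
  have hint2 : IntervalIntegrable (fun s => f (s + h)) MeasureTheory.volume (t - h) t := by
    apply ContinuousOn.intervalIntegrable
    apply ContinuousOn.comp hcont (continuousOn_id.add continuousOn_const)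
    intro x hx
    rw [Set.uIcc_of_le (by linarith)] at hx
    have : (0:ℝ) < x + h := by nlinarith [hx.1]
    exact this
  have key : (∫ s in t..(t + h), f s) = ∫ s in (t - h)..t, f (s + h) := by
    rw [intervalIntegral.integral_comp_add_right, sub_add_cancel]
  rw [key, ← intervalIntegral.integral_sub hint1 hint2]
  have hbd : ∀ x ∈ Set.uIoc (t - h) t, ‖f x - f (x + h)‖ ≤ K / (t - h) * h := by
    intro x hx
    rw [Set.uIoc_of_le (by linarith)] at hx
    have hx0 : 0 < x := lt_trans hth hx.1
    have hmv : ‖f (x + h) - f x‖ ≤ K / (t - h) * ‖(x + h) - x‖ := by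
      apply Convex.norm_image_sub_le_of_norm_hasDerivWithin_le
        (f' := f') (s := Set.Icc x (x + h))
      · intro y hy
        have hy0 : 0 < y := lt_of_lt_of_le hx0 hy.1
        exact (hderiv y hy0).hasDerivWithinAt
      · intro y hy
        have hy0 : 0 < y := lt_of_lt_of_le hx0 hy.1
        refine le_trans (hbound y hy0) ?_
        apply div_le_div_of_nonneg_left hK hth
        linarith [hy.1, hx.1]
      · exact convex_Icc _ _
      · exact ⟨le_refl x, by linarith⟩
      · exact ⟨by linarith, le_refl _⟩
    rw [norm_sub_rev]
    simpa [abs_of_pos hh] using hmv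
  have := intervalIntegral.norm_integral_le_of_norm_le_const hbd
  have habs : |t - (t - h)| = h := by rw [abs_of_nonneg] <;> linarith
  rw [habs] at this
  refine le_trans this (le_of_eq ?_)
  field_simp
end

section
/- Let E be a real Banach space, and let K, μ, c ≥ 0, T > 0. Let f : ℝ → E be continuous on [0, T] with ‖f(s)‖ ≤ μ K for all s ∈ [0, T], differentiable on (0, T] with ‖f′(s)‖ ≤ c K / s for all s ∈ (0, T]. Let h > 0 and N ∈ ℕ be such that 2Nh ≤ T. Then Σ_{l=1}^{N} ‖D(f, (2l−1)h, h)‖² ≤ 4 K² ( μ² + c² π² / 96 ) h². -/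
set_option maxHeartbeats 1000000

open intervalIntegral MeasureTheory

/-- Centered-difference bound away from the origin, via the mean value inequality. -/
lemma diff_bound {E : Type*} [NormedAddCommGroup E] [NormedSpace ℝ E] [CompleteSpace E]
    (f f' : ℝ → E) (K c T h a : ℝ)
    (hcont : ContinuousOn f (Set.Icc 0 T))
    (hderiv : ∀ s ∈ Set.Ioc (0 : ℝ) T, HasDerivWithinAt f (f' s) (Set.Ioc 0 T) s)
    (hf'b : ∀ s ∈ Set.Ioc (0 : ℝ) T, ‖f' s‖ ≤ c * K / s)
    (hcK : 0 ≤ c * K) (hh : 0 < h) (ha : 0 < a) (haT : a + 2 * h ≤ T) :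
    ‖(∫ s in a..(a + h), f s) - ∫ s in (a + h)..(a + 2 * h), f s‖ ≤ c * K / a * h * h := by
  have hsub : Set.Icc a T ⊆ Set.Ioc 0 T := fun x hx => ⟨lt_of_lt_of_le ha hx.1, hx.2⟩
  have hIccT : Set.Icc a (a + 2 * h) ⊆ Set.Icc a T := Set.Icc_subset_Icc le_rfl haT
  have key : ∀ u ∈ Set.Icc a (a + h), ‖f u - f (u + h)‖ ≤ c * K / a * h := by
    intro u hu
    have hu1 : u ∈ Set.Icc a T := ⟨hu.1, le_trans (le_trans hu.2 (by linarith)) haT⟩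
    have hu2 : u + h ∈ Set.Icc a T := ⟨by linarith [hu.1], le_trans (by linarith [hu.2]) haT⟩
    have mvt := Convex.norm_image_sub_le_of_norm_hasDerivWithin_le
      (f := f) (f' := f') (s := Set.Icc a T) (C := c * K / a)
      (fun x hx => (hderiv x (hsub hx)).mono hsub)
      (fun x hx => le_trans (hf'b x (hsub hx))
        (div_le_div_of_nonneg_left hcK ha hx.1))
      (convex_Icc a T) hu2 hu1
    have : ‖u - (u + h)‖ = h := by
      rw [show u - (u + h) = -h by ring, norm_neg, Real.norm_eq_abs, abs_of_pos hh]
    calc ‖f u - f (u + h)‖ ≤ c * K / a * ‖u - (u + h)‖ := mvt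
      _ = c * K / a * h := by rw [this]
  -- substitution in second integral
  have hsubst : (∫ s in (a + h)..(a + 2 * h), f s) = ∫ u in a..(a + h), f (u + h) := by
    rw [integral_comp_add_right f h, show a + 2 * h = a + h + h by ring]
  have hInt1 : IntervalIntegrable f volume a (a + h) := by
    apply ContinuousOn.intervalIntegrable
    apply hcont.mono
    rw [Set.uIcc_of_le (by linarith)]
    intro x hx
    exact ⟨le_trans ha.le hx.1, le_trans hx.2 (by linarith)⟩
  have hInt2 : IntervalIntegrable (fun u => f (u + h)) volume a (a + h) := by
    apply ContinuousOn.intervalIntegrable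
    apply (hcont.comp (continuous_id.add continuous_const).continuousOn)
    rw [Set.uIcc_of_le (by linarith)]
    intro x hx
    exact ⟨by simp; linarith [hx.1], by simp; linarith [hx.2]⟩
  rw [hsubst, ← intervalIntegral.integral_sub hInt1 hInt2]
  have := intervalIntegral.norm_integral_le_of_norm_le_const
    (a := a) (b := a + h) (C := c * K / a * h) (f := fun u => f u - f (u + h))
    (fun x hx => by
      apply key
      rw [Set.uIoc_of_le (by linarith)] at hx
      exact ⟨hx.1.le, hx.2⟩)
  calc ‖∫ u in a..(a+h), (f u - f (u + h))‖ ≤ c * K / a * h * |a + h - a| := this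
    _ = c * K / a * h * h := by rw [show a + h - a = h by ring, abs_of_pos hh]

lemma sum_inv_sq_shift (n : ℕ) :
    ∑ l ∈ Finset.Icc 2 n, (1:ℝ) / ((l:ℝ) - 1) ^ 2 ≤ Real.pi ^ 2 / 6 := by
  have key : ∀ m : ℕ, ∑ l ∈ Finset.Icc 2 m, (1:ℝ) / ((l:ℝ) - 1) ^ 2
      = ∑ k ∈ Finset.Icc 1 (m - 1), (1:ℝ) / (k:ℝ) ^ 2 := by
    intro m
    induction m with
    | zero => simp
    | succ k ih =>
      rcases Nat.eq_zero_or_pos k with rfl | hk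
      · norm_num
      · rw [Finset.sum_Icc_succ_top (by omega : 2 ≤ k + 1), ih, Nat.add_sub_cancel]
        conv_rhs => rw [show k = (k - 1) + 1 by omega,
          Finset.sum_Icc_succ_top (by omega : 1 ≤ k - 1 + 1)]
        congr 1
        rw [show k - 1 + 1 = k from by omega]
        push_cast
        norm_num
  rw [key]
  exact sum_le_hasSum _ (fun i _ => by positivity) hasSum_zeta_two

/-- Core summation estimate for the analytic semigroup case: if `‖f‖ ≤ μK` on `[0,T]`,
`f` is differentiable on `(0,T]` with `‖f′(s)‖ ≤ cK/s`, and `2Nh ≤ T`, then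
`Σ_{l=1}^{N} ‖D(f,(2l−1)h,h)‖² ≤ 4K²(μ² + c²π²/96) h²`. -/
theorem stmt12 {E : Type*} [NormedAddCommGroup E] [NormedSpace ℝ E] [CompleteSpace E]
    (f f' : ℝ → E) (K μ c T h : ℝ) (N : ℕ)
    (hK : 0 ≤ K) (hμ : 0 ≤ μ) (hc : 0 ≤ c) (hT : 0 < T)
    (hcont : ContinuousOn f (Set.Icc 0 T))
    (hfb : ∀ s ∈ Set.Icc (0 : ℝ) T, ‖f s‖ ≤ μ * K)
    (hderiv : ∀ s ∈ Set.Ioc (0 : ℝ) T, HasDerivWithinAt f (f' s) (Set.Ioc 0 T) s)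
    (hf'b : ∀ s ∈ Set.Ioc (0 : ℝ) T, ‖f' s‖ ≤ c * K / s)
    (hh : 0 < h) (hNh : 2 * N * h ≤ T) :
    ∑ l ∈ Finset.Icc 1 N,
        ‖(∫ s in ((2 * (l : ℝ) - 2) * h)..((2 * (l : ℝ) - 1) * h), f s) -
            ∫ s in ((2 * (l : ℝ) - 1) * h)..(2 * (l : ℝ) * h), f s‖ ^ 2 ≤
      4 * K ^ 2 * (μ ^ 2 + c ^ 2 * Real.pi ^ 2 / 96) * h ^ 2 := by
  have hμK : 0 ≤ μ * K := mul_nonneg hμ hK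
  have hcK : 0 ≤ c * K := mul_nonneg hc hK
  have hπ : (0:ℝ) < Real.pi := Real.pi_pos
  rcases Nat.eq_zero_or_pos N with hN0 | hN1
  · subst hN0
    simp only [Finset.Icc_eq_empty_of_lt (by norm_num : (1:ℕ) > 0), Finset.sum_empty]
    positivity
  -- term for l = 1
  have hNT : ∀ l : ℕ, l ∈ Finset.Icc 1 N → 2 * (l:ℝ) * h ≤ T := by
    intro l hl
    rw [Finset.mem_Icc] at hl
    have : (l:ℝ) ≤ N := Nat.cast_le.mpr hl.2
    nlinarith
  have term1 : ‖(∫ s in ((2 * (1:ℝ) - 2) * h)..((2 * (1:ℝ) - 1) * h), f s) -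
      ∫ s in ((2 * (1:ℝ) - 1) * h)..(2 * (1:ℝ) * h), f s‖ ^ 2 ≤ 4 * μ^2 * K^2 * h^2 := by
    have h2T : 2 * h ≤ T := by
      have := hNT 1 (Finset.mem_Icc.mpr ⟨le_refl 1, hN1⟩); norm_num at this; linarith
    have b1 : ‖∫ s in ((2 * (1:ℝ) - 2) * h)..((2 * (1:ℝ) - 1) * h), f s‖ ≤ μ * K * h := by
      have := intervalIntegral.norm_integral_le_of_norm_le_const
        (a := (2 * (1:ℝ) - 2) * h) (b := (2 * (1:ℝ) - 1) * h) (C := μ * K) (f := f)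
        (fun x hx => by
          rw [Set.uIoc_of_le (by nlinarith)] at hx
          exact hfb x ⟨by nlinarith [hx.1], by nlinarith [hx.2]⟩)
      calc ‖∫ s in ((2 * (1:ℝ) - 2) * h)..((2 * (1:ℝ) - 1) * h), f s‖
          ≤ μ * K * |(2 * (1:ℝ) - 1) * h - (2 * (1:ℝ) - 2) * h| := this
        _ = μ * K * h := by rw [show (2 * (1:ℝ) - 1) * h - (2 * (1:ℝ) - 2) * h = h by ring,
            abs_of_pos hh]
    have b2 : ‖∫ s in ((2 * (1:ℝ) - 1) * h)..(2 * (1:ℝ) * h), f s‖ ≤ μ * K * h := by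
      have := intervalIntegral.norm_integral_le_of_norm_le_const
        (a := (2 * (1:ℝ) - 1) * h) (b := 2 * (1:ℝ) * h) (C := μ * K) (f := f)
        (fun x hx => by
          rw [Set.uIoc_of_le (by nlinarith)] at hx
          exact hfb x ⟨by nlinarith [hx.1], by nlinarith [hx.2]⟩)
      calc ‖∫ s in ((2 * (1:ℝ) - 1) * h)..(2 * (1:ℝ) * h), f s‖
          ≤ μ * K * |2 * (1:ℝ) * h - (2 * (1:ℝ) - 1) * h| := this
        _ = μ * K * h := by rw [show 2 * (1:ℝ) * h - (2 * (1:ℝ) - 1) * h = h by ring,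
            abs_of_pos hh]
    have hd : ‖(∫ s in ((2 * (1:ℝ) - 2) * h)..((2 * (1:ℝ) - 1) * h), f s) -
        ∫ s in ((2 * (1:ℝ) - 1) * h)..(2 * (1:ℝ) * h), f s‖ ≤ 2 * (μ * K * h) := by
      calc _ ≤ ‖∫ s in ((2 * (1:ℝ) - 2) * h)..((2 * (1:ℝ) - 1) * h), f s‖ +
            ‖∫ s in ((2 * (1:ℝ) - 1) * h)..(2 * (1:ℝ) * h), f s‖ := norm_sub_le _ _
        _ ≤ 2 * (μ * K * h) := by linarith
    nlinarith [norm_nonneg ((∫ s in ((2 * (1:ℝ) - 2) * h)..((2 * (1:ℝ) - 1) * h), f s) -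
        ∫ s in ((2 * (1:ℝ) - 1) * h)..(2 * (1:ℝ) * h), f s)]
  -- terms for l ≥ 2
  have termL : ∀ l : ℕ, l ∈ Finset.Icc 2 N →
      ‖(∫ s in ((2 * (l:ℝ) - 2) * h)..((2 * (l:ℝ) - 1) * h), f s) -
          ∫ s in ((2 * (l:ℝ) - 1) * h)..(2 * (l:ℝ) * h), f s‖ ^ 2 ≤
        (c * K * h)^2 / 4 * (1 / ((l:ℝ) - 1)^2) := by
    intro l hl
    rw [Finset.mem_Icc] at hl
    have hl2 : (2:ℝ) ≤ (l:ℝ) := by exact_mod_cast hl.1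
    set a : ℝ := (2 * (l:ℝ) - 2) * h with ha_def
    have ha : 0 < a := by nlinarith
    have haT : a + 2 * h ≤ T := by
      have := hNT l (Finset.mem_Icc.mpr ⟨le_trans (by norm_num) hl.1, hl.2⟩)
      rw [ha_def]; nlinarith
    have hb := diff_bound f f' K c T h a hcont hderiv hf'b hcK hh ha haT
    have e1 : (2 * (l:ℝ) - 1) * h = a + h := by rw [ha_def]; ring
    have e2 : 2 * (l:ℝ) * h = a + 2 * h := by rw [ha_def]; ring
    rw [e1, e2]
    have hval : c * K / a * h * h = c * K * h / (2 * ((l:ℝ) - 1)) := by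
      rw [ha_def]
      rw [div_mul_eq_mul_div, div_mul_eq_mul_div, div_eq_div_iff (by nlinarith) (by nlinarith)]
      ring
    have hb2 := pow_le_pow_left₀ (norm_nonneg _) hb 2
    rw [hval] at hb2
    refine le_trans hb2 (le_of_eq ?_)
    rw [div_pow, div_mul_div_comm, mul_one,
      show (2 * ((l:ℝ) - 1)) ^ 2 = 4 * ((l:ℝ) - 1) ^ 2 by ring]
  -- assemble the sum
  have hsplit : Finset.Icc 1 N = insert 1 (Finset.Icc 2 N) := by
    ext x
    simp only [Finset.mem_Icc, Finset.mem_insert]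
    omega
  rw [hsplit, Finset.sum_insert (by simp)]
  -- bound the tail sum
  have tail : ∑ l ∈ Finset.Icc 2 N,
      ‖(∫ s in ((2 * (l:ℝ) - 2) * h)..((2 * (l:ℝ) - 1) * h), f s) -
          ∫ s in ((2 * (l:ℝ) - 1) * h)..(2 * (l:ℝ) * h), f s‖ ^ 2 ≤
      (c * K * h)^2 / 4 * (Real.pi^2 / 6) := by
    calc ∑ l ∈ Finset.Icc 2 N,
        ‖(∫ s in ((2 * (l:ℝ) - 2) * h)..((2 * (l:ℝ) - 1) * h), f s) -
            ∫ s in ((2 * (l:ℝ) - 1) * h)..(2 * (l:ℝ) * h), f s‖ ^ 2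
        ≤ ∑ l ∈ Finset.Icc 2 N, (c * K * h)^2 / 4 * (1 / ((l:ℝ) - 1)^2) :=
          Finset.sum_le_sum termL
      _ = (c * K * h)^2 / 4 * ∑ l ∈ Finset.Icc 2 N, (1:ℝ) / ((l:ℝ) - 1)^2 := by
          rw [Finset.mul_sum]
      _ ≤ (c * K * h)^2 / 4 * (Real.pi^2 / 6) := by
          exact mul_le_mul_of_nonneg_left (sum_inv_sq_shift N) (by positivity)
  have : (c * K * h)^2 / 4 * (Real.pi^2 / 6) + 4 * μ^2 * K^2 * h^2 =
      4 * K ^ 2 * (μ ^ 2 + c ^ 2 * Real.pi ^ 2 / 96) * h ^ 2 := by ring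
  simp only [Nat.cast_one]
  refine le_of_le_of_eq (add_le_add term1 tail) ?_
  ring
end

section
/- Let E be a real Banach space, a ∈ (0,1), K ≥ 0, and h > 0. Let f : ℝ → E be continuous on [0, 2h], differentiable on (0, 2h] with ‖f′(s)‖ ≤ K s^{a−1} for all s ∈ (0, 2h]. Then ‖∫_0^h f(s) ds − ∫_h^{2h} f(s) ds‖ ≤ (4 ln 2 / (1 + a)) · K h^{1+a}. -/
open Set intervalIntegral Real

lemma key_mvt {E : Type*} [NormedAddCommGroup E] [NormedSpace ℝ E]
    (a K h : ℝ) (ha0 : 0 < a) (hh : 0 < h)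
    (f f' : ℝ → E)
    (hcont : ContinuousOn f (Set.Icc 0 (2 * h)))
    (hderiv : ∀ s ∈ Set.Ioc (0 : ℝ) (2 * h), HasDerivWithinAt f (f' s) (Set.Ioc 0 (2 * h)) s)
    (hbound : ∀ s ∈ Set.Ioc (0 : ℝ) (2 * h), ‖f' s‖ ≤ K * s ^ (a - 1))
    {s : ℝ} (hs : s ∈ Set.Ioc 0 h) :
    ‖f (s + h) - f s‖ ≤ K / a * (s + h) ^ a - K / a * s ^ a := by
  obtain ⟨hs0, hsh⟩ := hs
  have hsub : Icc s (s + h) ⊆ Icc 0 (2 * h) := by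
    apply Icc_subset_Icc hs0.le; linarith
  have hmem : ∀ x ∈ Ico s (s + h), x ∈ Ioc (0:ℝ) (2*h) := fun x hx =>
    ⟨lt_of_lt_of_le hs0 hx.1, by nlinarith [hx.2]⟩
  have key := image_norm_le_of_norm_deriv_right_le_deriv_boundary'
    (f := fun x => f x - f s) (f' := f') (a := s) (b := s + h)
    ((hcont.mono hsub).sub continuousOn_const)
    (fun x hx => by
      have hx' := hmem x hx
      have hd : HasDerivAt f (f' x) x := by
        refine (hderiv x hx').hasDerivAt ?_
        exact Filter.mem_of_superset (Ioo_mem_nhds hx'.1 (lt_of_lt_of_le (by nlinarith [hx.2]) le_rfl)) Ioo_subset_Ioc_self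
      exact ((hd.sub_const (f s)).hasDerivWithinAt))
    (B := fun x => K / a * x ^ a - K / a * s ^ a) (B' := fun x => K * x ^ (a - 1))
    (by simp)
    ((continuousOn_const.mul (continuousOn_id.rpow_const fun x _ => Or.inr ha0.le)).sub continuousOn_const)
    (fun x hx => by
      have hx0 : (0:ℝ) < x := lt_of_lt_of_le hs0 hx.1
      have hd : HasDerivAt (fun x : ℝ => K / a * x ^ a - K / a * s ^ a)
          (K * x ^ (a - 1)) x := by
        have := (Real.hasDerivAt_rpow_const (x := x) (p := a) (Or.inl hx0.ne')).const_mul (K / a)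
        have heq : K / a * (a * x ^ (a - 1)) = K * x ^ (a - 1) := by
          field_simp
        simpa [heq] using this.sub_const (K / a * s ^ a)
      exact hd.hasDerivWithinAt)
    (fun x hx => hbound x (hmem x hx))
  have := key (right_mem_Icc.2 (by linarith))
  simpa using this

lemma two_rpow_sub_one_le {a : ℝ} (ha0 : 0 < a) (ha1 : a ≤ 1) :
    (2:ℝ) ^ a - 1 ≤ 2 * a * Real.log 2 := by
  have h2 : (2:ℝ) ^ a = Real.exp (a * Real.log 2) := by
    rw [Real.rpow_def_of_pos two_pos, mul_comm]
  set x := a * Real.log 2 with hx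
  have hlog2 : 0 < Real.log 2 := Real.log_pos one_lt_two
  have hx0 : 0 ≤ x := by positivity
  have hxle : x ≤ Real.log 2 := by nlinarith
  have h1 : Real.exp x ≤ 2 := by
    calc Real.exp x ≤ Real.exp (Real.log 2) := Real.exp_le_exp.2 hxle
    _ = 2 := Real.exp_log two_pos
  have key : (1 - x) * Real.exp x ≤ 1 := by
    have h := Real.add_one_le_exp (-x)
    rw [Real.exp_neg] at h
    have h' := mul_le_mul_of_nonneg_right h (Real.exp_pos x).le
    rw [inv_mul_cancel₀ (Real.exp_pos x).ne'] at h'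
    nlinarith
  have h2' : Real.exp x - 1 ≤ x * Real.exp x := by nlinarith
  rw [h2]
  nlinarith

/-- `l = 1` estimate in the sectorial case with `η > ν`: if `f` is continuous on `[0,2h]`
and differentiable on `(0,2h]` with `‖f′(s)‖ ≤ K s^{a−1}` for `a ∈ (0,1)`, then
`‖∫_0^h f − ∫_h^{2h} f‖ ≤ (4 ln 2 / (1+a)) K h^{1+a}`. -/
theorem stmt13 {E : Type*} [NormedAddCommGroup E] [NormedSpace ℝ E] [CompleteSpace E]
    (a K h : ℝ) (ha0 : 0 < a) (ha1 : a < 1) (hK : 0 ≤ K) (hh : 0 < h)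
    (f f' : ℝ → E)
    (hcont : ContinuousOn f (Set.Icc 0 (2 * h)))
    (hderiv : ∀ s ∈ Set.Ioc (0 : ℝ) (2 * h), HasDerivWithinAt f (f' s) (Set.Ioc 0 (2 * h)) s)
    (hbound : ∀ s ∈ Set.Ioc (0 : ℝ) (2 * h), ‖f' s‖ ≤ K * s ^ (a - 1)) :
    ‖(∫ s in (0 : ℝ)..h, f s) - ∫ s in h..(2 * h), f s‖ ≤
      (4 * Real.log 2 / (1 + a)) * K * h ^ (1 + a) := by
  have hle : h ≤ 2 * h := by linarith
  have hcrpow : Continuous fun x : ℝ => x ^ a :=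
    continuous_iff_continuousAt.2 fun x => Real.continuousAt_rpow_const x a (Or.inr ha0.le)
  have hint1 : IntervalIntegrable f MeasureTheory.volume 0 h :=
    (hcont.mono (Icc_subset_Icc le_rfl hle)).intervalIntegrable_of_Icc hh.le
  have hint2 : IntervalIntegrable (fun s => f (s + h)) MeasureTheory.volume 0 h := by
    apply ContinuousOn.intervalIntegrable_of_Icc hh.le
    apply hcont.comp ((continuous_id.add continuous_const).continuousOn)
    intro s hs
    exact ⟨by simp at hs ⊢; linarith [hs.1], by simp at hs ⊢; linarith [hs.2]⟩
  have hshift : (∫ s in h..(2 * h), f s) = ∫ s in (0:ℝ)..h, f (s + h) := by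
    rw [intervalIntegral.integral_comp_add_right f h, zero_add, two_mul]
  rw [hshift, ← intervalIntegral.integral_sub hint1 hint2]
  set g : ℝ → ℝ := fun s => K / a * (s + h) ^ a - K / a * s ^ a with hg
  have hg1 : IntervalIntegrable (fun s : ℝ => K / a * (s + h) ^ a) MeasureTheory.volume 0 h :=
    (continuous_const.mul (hcrpow.comp (continuous_id.add continuous_const))).intervalIntegrable _ _
  have hg2 : IntervalIntegrable (fun s : ℝ => K / a * s ^ a) MeasureTheory.volume 0 h :=
    (continuous_const.mul hcrpow).intervalIntegrable _ _
  have hgint : IntervalIntegrable g MeasureTheory.volume 0 h := hg1.sub hg2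
  have hbnd : ‖∫ s in (0:ℝ)..h, (f s - f (s + h))‖ ≤ |∫ s in (0:ℝ)..h, g s| := by
    apply intervalIntegral.norm_integral_le_abs_of_norm_le _ hgint
    apply MeasureTheory.ae_restrict_of_forall_mem measurableSet_uIoc
    intro t ht
    rw [Set.uIoc_of_le hh.le] at ht
    rw [norm_sub_rev]
    exact key_mvt a K h ha0 hh f f' hcont hderiv hbound ht
  have ha1' : (0:ℝ) < a + 1 := by linarith
  have i1 : (∫ s in (0:ℝ)..h, (s + h) ^ a) = ((2*h) ^ (a+1) - h ^ (a+1)) / (a+1) := by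
    rw [intervalIntegral.integral_comp_add_right (fun x => x ^ a) h, zero_add,
      show h + h = 2 * h by ring, integral_rpow (Or.inl (by linarith))]
  have i2 : (∫ s in (0:ℝ)..h, s ^ a) = h ^ (a+1) / (a+1) := by
    rw [integral_rpow (Or.inl (by linarith)), Real.zero_rpow ha1'.ne', sub_zero]
  have hgval : (∫ s in (0:ℝ)..h, g s)
      = K / a * (((2*h) ^ (a+1) - h ^ (a+1)) / (a+1)) - K / a * (h ^ (a+1) / (a+1)) := by
    rw [hg, intervalIntegral.integral_sub hg1 hg2, intervalIntegral.integral_const_mul,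
      intervalIntegral.integral_const_mul, i1, i2]
  have h2h : (2*h) ^ (a+1) = 2 ^ (a+1) * h ^ (a+1) :=
    Real.mul_rpow (by norm_num) hh.le
  have h2a : (2:ℝ) ^ (a+1) = 2 ^ a * 2 := by
    rw [Real.rpow_add two_pos, Real.rpow_one]
  have hH : (0:ℝ) ≤ h ^ (a+1) := Real.rpow_nonneg hh.le _
  have heq1 : K / a * (((2*h) ^ (a+1) - h ^ (a+1)) / (a+1)) - K / a * (h ^ (a+1) / (a+1))
      = K * h ^ (a+1) * (2 * ((2:ℝ) ^ a - 1)) / (a * (a+1)) := by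
    rw [h2h, h2a]; field_simp; ring
  have hone : (1:ℝ) ≤ 2 ^ a := by
    have := Real.rpow_le_rpow_of_exponent_le one_le_two ha0.le
    simpa using this
  have hsc : K * h ^ (a+1) * (2 * ((2:ℝ) ^ a - 1)) / (a * (a+1))
      ≤ K * h ^ (a+1) * (2 * (2 * a * Real.log 2)) / (a * (a+1)) := by
    rw [div_le_div_iff_of_pos_right (by positivity)]
    nlinarith [mul_le_mul_of_nonneg_left (two_rpow_sub_one_le ha0 ha1.le)
      (mul_nonneg (mul_nonneg hK hH) (by norm_num : (0:ℝ) ≤ 2))]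
  have heq2 : K * h ^ (a+1) * (2 * (2 * a * Real.log 2)) / (a * (a+1))
      = 4 * Real.log 2 / (1 + a) * K * h ^ (1 + a) := by
    rw [add_comm 1 a]; field_simp; ring
  calc ‖∫ s in (0:ℝ)..h, (f s - f (s + h))‖ ≤ |∫ s in (0:ℝ)..h, g s| := hbnd
    _ = K * h ^ (a+1) * (2 * ((2:ℝ) ^ a - 1)) / (a * (a+1)) := by
        rw [hgval, heq1]; exact abs_of_nonneg (div_nonneg (mul_nonneg (mul_nonneg hK hH) (by linarith [hone])) (by positivity))
    _ ≤ K * h ^ (a+1) * (2 * (2 * a * Real.log 2)) / (a * (a+1)) := hsc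
    _ = 4 * Real.log 2 / (1 + a) * K * h ^ (1 + a) := heq2
end
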